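/- arXiv:1810.10925 — 3 statements merged into one kernel-verified Lean document; each statement's English description precedes it below -/
import Mathlib

section
/- Let g ≥ 2, h, and t be integers with t ≥ 2 and g^t ≤ h. Let (m_i)_{i≥1} be a sequence of integers with m_1 > g^{h+2} and m_{i+1} − m_i > g^{h+2} for all i ≥ 1. Define W_0 = [0, m_1] ∪ ⋃_{i≥1} [m_i+t+1, m_{i+1}] and, for j = 1, …, h−1, W_j = ⋃_{i ≥ 1, i ≡ j (mod h−1)} [m_i+1, m_i+t], where [a,b] denotes the set of integers in the interval [a,b]. Let A = A_g(W_0) ∪ A_g(W_1) ∪ ⋯ ∪ A_g(W_{h-1}). Then every integer n > m_2 belongs to h(A \ {g^2}), the h-fold sumset of A \ {g^2}. -/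
/-- `AgSet g W` is the set of all integers of the form `∑ f ∈ F, a f * g ^ f`,
where `F` is a finite nonempty subset of `W` and `1 ≤ a f ≤ g - 1` for each `f ∈ F`. -/
def AgSet (g : ℕ) (W : Set ℕ) : Set ℕ :=
  {n | ∃ F : Finset ℕ, F.Nonempty ∧ ↑F ⊆ W ∧ ∃ a : ℕ → ℕ,
    (∀ f ∈ F, 1 ≤ a f ∧ a f ≤ g - 1) ∧ n = ∑ f ∈ F, a f * g ^ f}

/-- `FoldSum h A` is the `h`-fold sumset `hA`, the set of all sums `a₁ + ⋯ + a_h`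
with each `aᵢ ∈ A`. -/
def FoldSum (h : ℕ) (A : Set ℕ) : Set ℕ :=
  {n | ∃ x : Fin h → ℕ, (∀ i, x i ∈ A) ∧ n = ∑ i, x i}

/-- `A` is an asymptotic basis of order `h` if every sufficiently large integer lies in `hA`. -/
def IsAsymptoticBasis (h : ℕ) (A : Set ℕ) : Prop :=
  ∀ᶠ n in Filter.atTop, n ∈ FoldSum h A

/-- `A` is a minimal asymptotic basis of order `h` if it is an asymptotic basis of order `h`
and no proper subset of `A` is an asymptotic basis of order `h`. -/
def IsMinimalAsymptoticBasis (h : ℕ) (A : Set ℕ) : Prop :=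
  IsAsymptoticBasis h A ∧ ∀ B : Set ℕ, B ⊂ A → ¬ IsAsymptoticBasis h B


open Finset

section generic
variable {g : ℕ}

/-- telescoping chain -/
lemma chain_sum (hg : 1 ≤ g) (a b : ℕ) (hab : a ≤ b) :
    (∑ l ∈ Finset.Ico a b, (g - 1) * g ^ l) + g ^ a = g ^ b := by
  obtain ⟨s, rfl⟩ : ∃ s, g = s + 1 := ⟨g - 1, by omega⟩
  induction b, hab using Nat.le_induction with
  | base => simp
  | succ b hab ih =>
    rw [Finset.sum_Ico_succ_top hab, pow_succ]
    simp only [Nat.add_sub_cancel] at *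
    nlinarith [ih]

lemma digit_mod_expand (hg : 1 ≤ g) (x : ℕ) : ∀ N : ℕ,
    x % g ^ N = ∑ k ∈ Finset.range N, (x / g ^ k % g) * g ^ k := by
  intro N
  induction N with
  | zero => simp [Nat.mod_one]
  | succ N ih =>
    rw [Finset.sum_range_succ, ← ih, pow_succ, Nat.mod_mul, mul_comm (g^N)]

lemma digit_expand (hg : 1 ≤ g) (x N : ℕ) (hx : x < g ^ N) :
    x = ∑ k ∈ Finset.range N, (x / g ^ k % g) * g ^ k := by
  rw [← digit_mod_expand hg x N, Nat.mod_eq_of_lt hx]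

/-- peel one unit off position κ -/
lemma peel_sum (F : Finset ℕ) (a : ℕ → ℕ) (κ : ℕ) (hκ : κ ∈ F) (h1 : 1 ≤ a κ) :
    ∑ k ∈ F, a k * g ^ k
      = (∑ k ∈ F, (if k = κ then a k - 1 else a k) * g ^ k) + g ^ κ := by
  rw [← Finset.add_sum_erase F _ hκ, ← Finset.add_sum_erase F (fun k => (if k = κ then a k - 1 else a k) * g ^ k) hκ]
  have h2 : ∑ k ∈ F.erase κ, (if k = κ then a k - 1 else a k) * g ^ k
      = ∑ k ∈ F.erase κ, a k * g ^ k := by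
    apply Finset.sum_congr rfl
    intro k hk
    rw [if_neg (Finset.ne_of_mem_erase hk)]
  rw [h2, if_pos rfl]
  have h3 : (a κ - 1) * g ^ κ + g ^ κ = a κ * g ^ κ := by
    obtain ⟨s, hs⟩ : ∃ s, a κ = s + 1 := ⟨a κ - 1, by omega⟩
    rw [hs]; simp [Nat.add_sub_cancel]; ring
  omega

/-- value has a digit at position ≥ 3 → bigger than g² -/
lemma val_ge3 (F : Finset ℕ) (a : ℕ → ℕ) (hg : 2 ≤ g) {k₀ : ℕ} (hk₀ : k₀ ∈ F)
    (ha : a k₀ ≠ 0) (h3 : 3 ≤ k₀) : g ^ 2 < ∑ k ∈ F, a k * g ^ k := by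
  have h1 : a k₀ * g ^ k₀ ≤ ∑ k ∈ F, a k * g ^ k :=
    Finset.single_le_sum (f := fun k => a k * g ^ k) (fun i _ => Nat.zero_le _) hk₀
  have h2 : g ^ 3 ≤ g ^ k₀ := Nat.pow_le_pow_right (by omega) h3
  have h3' : g ^ 2 < g ^ 3 := Nat.pow_lt_pow_right (by omega) (by omega)
  have : g ^ k₀ ≤ a k₀ * g ^ k₀ := Nat.le_mul_of_pos_left _ (by omega)
  omega

lemma val_low (F : Finset ℕ) (a : ℕ → ℕ) (hg : 2 ≤ g)
    (hub : ∀ k ∈ F, a k ≤ g - 1) (hlow : ∀ k ∈ F, a k ≠ 0 → k ≤ 1) :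
    ∑ k ∈ F, a k * g ^ k < g ^ 2 := by
  classical
  have h1 : ∑ k ∈ F, a k * g ^ k = ∑ k ∈ F.filter (fun k => k ≤ 1), a k * g ^ k := by
    refine (Finset.sum_filter_of_ne ?_).symm
    intro x hx hne
    exact hlow x hx (by intro h0; apply hne; rw [h0]; ring)
  have h2 : F.filter (fun k => k ≤ 1) ⊆ {0, 1} := by
    intro k hk
    simp only [Finset.mem_filter] at hk
    simp only [Finset.mem_insert, Finset.mem_singleton]
    omega
  have h3 : ∑ k ∈ F.filter (fun k => k ≤ 1), a k * g ^ k
      ≤ ∑ k ∈ F.filter (fun k => k ≤ 1), (g - 1) * g ^ k := by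
    apply Finset.sum_le_sum
    intro k hk
    exact Nat.mul_le_mul_right _ (hub k (Finset.mem_filter.1 hk).1)
  have h4 : ∑ k ∈ F.filter (fun k => k ≤ 1), (g - 1) * g ^ k
      ≤ ∑ k ∈ ({0, 1} : Finset ℕ), (g - 1) * g ^ k :=
    Finset.sum_le_sum_of_subset_of_nonneg h2 (fun _ _ _ => Nat.zero_le _)
  have h5 : ∑ k ∈ ({0, 1} : Finset ℕ), (g - 1) * g ^ k < g ^ 2 := by
    obtain ⟨s, rfl⟩ : ∃ s, g = s + 2 := ⟨g - 2, by omega⟩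
    simp [Finset.sum_pair]
    ring_nf
    nlinarith []
  omega

lemma ne2low (F : Finset ℕ) (a : ℕ → ℕ) (hg : 2 ≤ g)
    (hub : ∀ k ∈ F, a k ≤ g - 1) (h2 : ∀ k ∈ F, a k ≠ 0 → k ≠ 2) :
    ∑ k ∈ F, a k * g ^ k ≠ g ^ 2 := by
  by_cases hex : ∃ k ∈ F, a k ≠ 0 ∧ 3 ≤ k
  · obtain ⟨k₀, hk₀, ha, h3⟩ := hex
    exact (val_ge3 F a hg hk₀ ha h3).ne'
  · push_neg at hex
    have : ∀ k ∈ F, a k ≠ 0 → k ≤ 1 := by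
      intro k hk ha
      have := h2 k hk ha
      have := hex k hk ha
      omega
    exact (val_low F a hg hub this).ne

end generic


open Finset


section fold
variable {B : Set ℕ}

lemma fold_zero : (0 : ℕ) ∈ FoldSum 0 B :=
  ⟨Fin.elim0, fun i => i.elim0, by simp⟩

lemma fold_one {x : ℕ} (hx : x ∈ B) : x ∈ FoldSum 1 B :=
  ⟨fun _ => x, fun _ => hx, by simp⟩

lemma fold_add {x y p q : ℕ} (hx : x ∈ FoldSum p B) (hy : y ∈ FoldSum q B) :
    x + y ∈ FoldSum (p + q) B := by
  obtain ⟨xs, hxs, rfl⟩ := hx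
  obtain ⟨ys, hys, rfl⟩ := hy
  refine ⟨Fin.append xs ys, ?_, ?_⟩
  · intro i
    refine Fin.addCases (fun j => ?_) (fun j => ?_) i
    · rw [Fin.append_left]; exact hxs j
    · rw [Fin.append_right]; exact hys j
  · rw [Fin.sum_univ_add]
    simp [Fin.append_left, Fin.append_right]

lemma fold_congr {x p q : ℕ} (hpq : p = q) (hx : x ∈ FoldSum p B) : x ∈ FoldSum q B := hpq ▸ hx

lemma fold_finset (T : Finset ℕ) (f : ℕ → ℕ) (hf : ∀ j ∈ T, f j ∈ B) :
    (∑ j ∈ T, f j) ∈ FoldSum T.card B := by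
  classical
  induction T using Finset.induction_on with
  | empty => simpa using fold_zero
  | @insert a s ha ih =>
    rw [Finset.sum_insert ha, Finset.card_insert_of_notMem ha]
    refine fold_congr (by omega) (fold_add (fold_one (hf a (Finset.mem_insert_self a s)))
      (ih (fun j hj => hf j (Finset.mem_insert_of_mem hj))))

end fold

section agset
variable {g : ℕ}

lemma agset_mono {V V' : Set ℕ} (hVV : V ⊆ V') : AgSet g V ⊆ AgSet g V' := by
  rintro x ⟨F, hF, hFV, a, ha, rfl⟩
  exact ⟨F, hF, fun k hk => hVV (hFV hk), a, ha, rfl⟩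

/-- add two AgSet elements with separated supports -/
lemma agset_add {V V' : Set ℕ} {x y K : ℕ} (hx : x ∈ AgSet g V) (hy : y ∈ AgSet g V')
    (hV : ∀ k ∈ V, k < K) (hV' : ∀ k ∈ V', K ≤ k) :
    x + y ∈ AgSet g (V ∪ V') := by
  classical
  obtain ⟨F, hF, hFV, a, ha, rfl⟩ := hx
  obtain ⟨F', hF', hFV', a', ha', rfl⟩ := hy
  have hdisj : Disjoint F F' := by
    rw [Finset.disjoint_left]
    intro k hk hk'
    exact absurd (hV' k (hFV' hk')) (by have := hV k (hFV hk); omega)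
  refine ⟨F ∪ F', hF.mono Finset.subset_union_left, ?_, fun k => if k ∈ F then a k else a' k, ?_, ?_⟩
  · intro k hk
    rcases Finset.mem_union.1 (by exact_mod_cast hk) with h | h
    · exact Set.mem_union_left _ (hFV h)
    · exact Set.mem_union_right _ (hFV' h)
  · intro k hk
    dsimp only
    rcases Finset.mem_union.1 hk with h | h
    · rw [if_pos h]; exact ha k h
    · rw [if_neg (fun hc => Finset.disjoint_left.1 hdisj hc h)]; exact ha' k h
  · rw [Finset.sum_union hdisj]
    congr 1
    · exact Finset.sum_congr rfl (fun k hk => by dsimp only; rw [if_pos hk])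
    · exact Finset.sum_congr rfl (fun k hk => by
        dsimp only; rw [if_neg (fun hc => Finset.disjoint_left.1 hdisj hc hk)])

/-- single block share: u·g^K with 1 ≤ u < g^L is represented with digits in [K, K+L-1] -/
lemma agset_single (hg : 2 ≤ g) (u K L : ℕ) (hu1 : 1 ≤ u) (hu2 : u < g ^ L) :
    u * g ^ K ∈ AgSet g {k : ℕ | K ≤ k ∧ k ≤ K + L - 1} := by
  classical
  have hL : 1 ≤ L := by
    rcases Nat.eq_zero_or_pos L with h | h
    · subst h; simp at hu2; omega
    · exact h
  set dig := fun l => u / g ^ l % g with hdig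
  have hexp : u = ∑ k ∈ Finset.range L, dig k * g ^ k := digit_expand (by omega : 1 ≤ g) u L hu2
  have hne : ∃ l ∈ Finset.range L, dig l ≠ 0 := by
    by_contra hc
    push_neg at hc
    have : u = 0 := by
      rw [hexp]
      exact Finset.sum_eq_zero (fun l hl => by rw [hc l hl]; ring)
    omega
  refine ⟨((Finset.range L).filter (fun l => dig l ≠ 0)).image (fun l => l + K),
    ?_, ?_, fun k => dig (k - K), ?_, ?_⟩
  · obtain ⟨l, hl, hdl⟩ := hne
    exact ⟨l + K, Finset.mem_image_of_mem _ (Finset.mem_filter.2 ⟨hl, hdl⟩)⟩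
  · intro k hk
    simp only [Finset.coe_image, Set.mem_image, Finset.mem_coe, Finset.mem_filter,
      Finset.mem_range] at hk
    obtain ⟨l, ⟨hl, _⟩, rfl⟩ := hk
    exact ⟨by omega, by omega⟩
  · intro k hk
    simp only [Finset.mem_image, Finset.mem_filter, Finset.mem_range] at hk
    obtain ⟨l, ⟨hl, hdl⟩, rfl⟩ := hk
    simp only [Nat.add_sub_cancel]
    constructor
    · omega
    · have : dig l < g := Nat.mod_lt _ (by omega)
      omega
  · rw [Finset.sum_image (by intro x _ y _ h; simp only at h; omega)]
    have : ∑ l ∈ (Finset.range L).filter (fun l => dig l ≠ 0), dig (l + K - K) * g ^ (l + K)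
        = ∑ l ∈ (Finset.range L).filter (fun l => dig l ≠ 0), (dig l * g ^ l) * g ^ K := by
      apply Finset.sum_congr rfl
      intro l _
      rw [Nat.add_sub_cancel, pow_add]
      ring
    rw [this, ← Finset.sum_mul]
    rw [Finset.sum_filter_of_ne (by intro x _ hne' h0; apply hne'; rw [h0]; ring)]
    rw [← hexp]

end agset


section ctx
variable {g h t : ℕ} (hg : 2 ≤ g) (ht : 2 ≤ t) (hth : g ^ t ≤ h)
variable {m : ℕ → ℕ} (hm1 : g ^ (h + 2) < m 1)
variable (hm : ∀ i : ℕ, 1 ≤ i → m i + g ^ (h + 2) < m (i + 1))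
variable {W : ℕ → Set ℕ}
variable (hW0 : W 0 = Set.Icc 0 (m 1) ∪
      ⋃ i ∈ {i : ℕ | 1 ≤ i}, Set.Icc (m i + t + 1) (m (i + 1)))
variable (hWj : ∀ j : ℕ, 1 ≤ j → j ≤ h - 1 →
      W j = ⋃ i ∈ {i : ℕ | 1 ≤ i ∧ i % (h - 1) = j % (h - 1)}, Set.Icc (m i + 1) (m i + t))

section numeric
include hg ht hth

lemma fact_h4 : 4 ≤ h := by
  have h1 : (2:ℕ) ^ 2 ≤ g ^ t :=
    (Nat.pow_le_pow_left hg 2).trans (Nat.pow_le_pow_right (by omega) ht)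
  omega

lemma fact_t_lt_h : t < h := by
  have h1 : t < 2 ^ t := (Nat.lt_two_pow_self (n := t))
  have h2 : (2:ℕ) ^ t ≤ g ^ t := Nat.pow_le_pow_left hg t
  omega

lemma fact_pow_big : h + h + 2 ≤ g ^ (h + 2) := by
  have h1 : h + 1 < 2 ^ (h + 1) := (Nat.lt_two_pow_self (n := h+1))
  have h2 : (2:ℕ) ^ (h + 2) ≤ g ^ (h + 2) := Nat.pow_le_pow_left hg _
  have h3 : (2:ℕ) ^ (h + 2) = 2 * 2 ^ (h+1) := by ring
  omega

include hm1 in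
lemma m_one_big : h + h + 2 < m 1 := by
  have := fact_pow_big hg ht hth
  omega

end numeric

section mstruct
include hg hm

lemma m_mono : ∀ i j : ℕ, 1 ≤ i → i ≤ j → m i ≤ m j := by
  intro i j h1 hij
  induction j, hij using Nat.le_induction with
  | base => exact le_refl _
  | succ j hij ih =>
    have := hm j (by omega)
    omega

lemma m_growth : ∀ j : ℕ, m 1 + j ≤ m (j + 1) := by
  intro j
  induction j with
  | zero => simp
  | succ j ih =>
    have h1 := hm (j+1) (by omega)
    have h2 : 1 ≤ g ^ (h+2) := Nat.one_le_pow _ _ (by omega)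
    omega

include ht hth hm1 in
lemma myexists_between {k : ℕ} (hk : m 1 < k) : ∃ i, 1 ≤ i ∧ m i < k ∧ k ≤ m (i + 1) := by
  classical
  have hbig := m_one_big hg ht hth hm1
  set P := fun i => 1 ≤ i ∧ m i < k with hP
  have hP1 : P 1 := ⟨le_refl 1, hk⟩
  have h1k : 1 ≤ k := by omega
  set i := Nat.findGreatest P k with hi
  have hPi : P i := Nat.findGreatest_spec h1k hP1
  have hik : i ≤ k := Nat.findGreatest_le k
  have hilt : i < k := by
    by_contra hc
    have hik2 : i = k := by omega
    have h2 : m 1 + (k - 1) ≤ m (k - 1 + 1) := m_growth hg hm (k - 1)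
    have h3 : k - 1 + 1 = k := by omega
    rw [h3] at h2
    have h5 := hPi.2
    rw [hik2] at h5
    omega
  refine ⟨i, hPi.1, hPi.2, ?_⟩
  by_contra hc
  exact Nat.findGreatest_is_greatest (by omega : Nat.findGreatest P k < i + 1) (by omega)
    ⟨by omega, by omega⟩

include ht hth in
lemma block_unique {i i' k : ℕ} (hi : 1 ≤ i) (hi' : 1 ≤ i')
    (h1 : m i < k) (h2 : k ≤ m i + t) (h3 : m i' < k) (h4 : k ≤ m i' + t) : i = i' := by
  by_contra hne
  have htpow : t + 1 ≤ g ^ (h + 2) := by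
    have := fact_pow_big hg ht hth
    have := fact_t_lt_h hg ht hth
    omega
  have key : ∀ a b : ℕ, 1 ≤ a → a < b → k ≤ m a + t → m b < k → False := by
    intro a b ha hab h5 h6
    have hmono : m (a+1) ≤ m b := m_mono hg hm (a+1) b (by omega) (by omega)
    have := hm a ha
    omega
  rcases Nat.lt_or_ge i i' with hlt | hge
  · exact key i i' hi hlt h2 h3
  · exact key i' i hi' (by omega) h4 h1

end mstruct

section wstruct

include hW0 in
lemma W0_of_le {k : ℕ} (hk : k ≤ m 1) : k ∈ W 0 := by
  rw [hW0]; left; exact ⟨Nat.zero_le _, hk⟩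

include hW0 in
lemma W0_of_run {i k : ℕ} (hi : 1 ≤ i) (h1 : m i + t < k) (h2 : k ≤ m (i + 1)) : k ∈ W 0 := by
  rw [hW0]; right
  simp only [Set.mem_iUnion, Set.mem_setOf_eq, Set.mem_Icc]
  exact ⟨i, hi, by omega, h2⟩

include hg ht hth hm hW0 in
lemma run_mem {i l : ℕ} (hi : 1 ≤ i) (hl : l ≤ h - 1) : m i - l ∈ W 0 := by
  rcases Nat.lt_or_ge 1 i with h2 | h2
  · obtain ⟨i', rfl⟩ : ∃ i', i = i' + 1 := ⟨i - 1, by omega⟩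
    have hi' : 1 ≤ i' := by omega
    have hgap := hm i' hi'
    have htpow : t + h + 1 ≤ g ^ (h + 2) := by
      have := fact_pow_big hg ht hth
      have := fact_t_lt_h hg ht hth
      omega
    exact W0_of_run hW0 hi' (by omega) (by omega)
  · have h3 : i = 1 := by omega
    subst h3
    exact W0_of_le hW0 (by omega)

include hg ht hth hm1 hm in
lemma run_not_block {i l : ℕ} (hi : 1 ≤ i) (hl : l ≤ h - 1) :
    ¬ ∃ i', 1 ≤ i' ∧ m i' < m i - l ∧ m i - l ≤ m i' + t := by
  rintro ⟨i', hi', hlt, hle⟩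
  have hbig := m_one_big hg ht hth hm1
  have h4 := fact_h4 hg ht hth
  have hii' : i' < i := by
    by_contra hc
    have := m_mono hg hm i i' hi (by omega)
    omega
  have hmono : m (i' + 1) ≤ m i := m_mono hg hm (i'+1) i (by omega) (by omega)
  have hgap := hm i' hi'
  have htpow : t + h + 1 ≤ g ^ (h + 2) := by
    have := fact_pow_big hg ht hth
    have := fact_t_lt_h hg ht hth
    omega
  omega

include hg ht hth hm1 hW0 in
lemma two_in_W0 : (2 : ℕ) ∈ W 0 := by
  have := m_one_big hg ht hth hm1
  exact W0_of_le hW0 (by omega)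

include hg ht hth hWj in
lemma mem_W_cls {i k : ℕ} (hi : 1 ≤ i) (h1 : m i < k) (h2 : k ≤ m i + t) :
    k ∈ W (if i % (h - 1) = 0 then h - 1 else i % (h - 1)) := by
  have h4 := fact_h4 hg ht hth
  have hmod : i % (h-1) < h - 1 := Nat.mod_lt _ (by omega)
  by_cases hc : i % (h - 1) = 0
  · rw [if_pos hc, hWj (h-1) (by omega) (le_refl _)]
    simp only [Set.mem_iUnion, Set.mem_setOf_eq, Set.mem_Icc]
    exact ⟨i, ⟨hi, by rw [Nat.mod_self, hc]⟩, by omega, h2⟩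
  · rw [if_neg hc, hWj (i % (h-1)) (by omega) (by omega)]
    simp only [Set.mem_iUnion, Set.mem_setOf_eq, Set.mem_Icc]
    exact ⟨i, ⟨hi, by rw [Nat.mod_eq_of_lt hmod]⟩, by omega, h2⟩

include hg ht hth in
lemma cls_le {i : ℕ} : 1 ≤ (if i % (h - 1) = 0 then h - 1 else i % (h - 1)) ∧
    (if i % (h - 1) = 0 then h - 1 else i % (h - 1)) ≤ h - 1 := by
  have h4 := fact_h4 hg ht hth
  have hmod : i % (h-1) < h - 1 := Nat.mod_lt _ (by omega)
  split <;> omega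

end wstruct

section parts
variable {A : Set ℕ} (hA : A = ⋃ j ∈ Finset.range h, AgSet g (W j))

include hA in
lemma part_mem {j : ℕ} (hj : j < h) (F : Finset ℕ) (a : ℕ → ℕ)
    (hW : ∀ k ∈ F, a k ≠ 0 → k ∈ W j)
    (hub : ∀ k ∈ F, a k ≤ g - 1)
    (hne : ∃ k ∈ F, a k ≠ 0)
    (hne2 : (∑ k ∈ F, a k * g ^ k) ≠ g ^ 2) :
    (∑ k ∈ F, a k * g ^ k) ∈ A \ {g ^ 2} := by
  classical
  constructor
  · rw [hA]
    simp only [Finset.mem_range, Set.mem_iUnion]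
    refine ⟨j, hj, ?_⟩
    refine ⟨F.filter (fun k => a k ≠ 0), ?_, ?_, a, ?_, ?_⟩
    · obtain ⟨k, hk, hak⟩ := hne
      exact ⟨k, Finset.mem_filter.2 ⟨hk, hak⟩⟩
    · intro k hk
      simp only [Finset.coe_filter, Set.mem_setOf_eq] at hk
      exact hW k hk.1 hk.2
    · intro k hk
      have := Finset.mem_filter.1 hk
      exact ⟨by omega, hub k this.1⟩
    · exact (Finset.sum_filter_of_ne (fun x _ hx => by
        intro h0; apply hx; rw [h0]; ring)).symm
  · exact hne2

include hg ht hth hm1 hm hW0 hA in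
lemma chainFS : ∀ s : ℕ, 1 ≤ s → ∀ K c' : ℕ, s + 2 ≤ K →
    (∀ l, l ≤ s - 1 → (K - l) ∈ W 0) → c' ≤ g - 1 →
    g ^ K + c' * g ^ 2 ∈ FoldSum s (A \ {g ^ 2}) := by
  intro s hs
  induction s, hs using Nat.le_induction with
  | base =>
    intro K c' hK hrun hc
    apply fold_one
    have hKne2 : K ≠ 2 := by omega
    have hval : g ^ K + c' * g ^ 2 = ∑ k ∈ ({K, 2} : Finset ℕ), (fun k => if k = 2 then c' else 1) k * g ^ k := by
      rw [Finset.sum_pair hKne2]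
      simp [hKne2]
    rw [hval]
    apply part_mem hA (by have := fact_h4 hg ht hth; omega : 0 < h)
    · intro k hk _
      rcases Finset.mem_insert.1 hk with rfl | hk2
      · have := hrun 0 (by omega)
        simpa using this
      · rw [Finset.mem_singleton.1 hk2]
        exact two_in_W0 hg ht hth hm1 hW0
    · intro k hk
      rcases Finset.mem_insert.1 hk with rfl | hk2
      · simp [hKne2]; omega
      · rw [Finset.mem_singleton.1 hk2]; simp [hc]
    · exact ⟨K, Finset.mem_insert_self _ _, by simp [hKne2]⟩
    · rw [← hval]
      have h9 : g ^ 2 < g ^ K := Nat.pow_lt_pow_right (by omega) (by omega)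
      have h10 : g ^ 2 < g ^ K + c' * g ^ 2 := lt_of_lt_of_le h9 (Nat.le_add_right _ _)
      exact h10.ne'
  | succ s hs ih =>
    intro K c' hK hrun hc
    have hKpos : 1 ≤ K := by omega
    have hsplit : g ^ K + c' * g ^ 2 = (g - 1) * g ^ (K - 1) + (g ^ (K - 1) + c' * g ^ 2) := by
      have h1 : (g - 1) * g ^ (K-1) + g ^ (K-1) = g * g ^ (K-1) := by
        obtain ⟨s', rfl⟩ : ∃ s', g = s' + 1 := ⟨g - 1, by omega⟩
        simp [Nat.add_sub_cancel]; ring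
      have h2 : g * g ^ (K - 1) = g ^ K := by
        rw [← pow_succ']
        congr 1
        omega
      calc g ^ K + c' * g ^ 2 = g * g ^ (K-1) + c' * g ^ 2 := by rw [h2]
      _ = ((g-1) * g ^ (K-1) + g ^ (K-1)) + c' * g ^ 2 := by rw [h1]
      _ = (g-1) * g ^ (K-1) + (g ^ (K-1) + c' * g ^ 2) := by ring
    rw [hsplit]
    refine fold_congr (by omega) (fold_add (fold_one ?_) (ih (K-1) c' (by omega) ?_ hc))
    · have hval : (g - 1) * g ^ (K - 1) = ∑ k ∈ ({K - 1} : Finset ℕ), (g-1) * g ^ k := by simp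
      rw [hval]
      apply part_mem hA (by have := fact_h4 hg ht hth; omega : 0 < h)
      · intro k hk _
        rw [Finset.mem_singleton.1 hk]
        have := hrun 1 (by omega)
        simpa using this
      · intro k _; exact le_refl _
      · exact ⟨K - 1, Finset.mem_singleton_self _, by omega⟩
      · rw [← hval]
        apply ne_of_gt
        apply val_ge3 (g := g) {K-1} (fun _ => g - 1) hg (Finset.mem_singleton_self _)
        · omega
        · omega
    · intro l hl
      have := hrun (l + 1) (by omega)
      have heq : K - 1 - l = K - (l + 1) := by omega
      rw [heq]
      exact this

include hg ht hth hm1 hm hW0 in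
lemma claimB : ∀ (I : Finset ℕ), I.Nonempty → (∀ i ∈ I, 1 ≤ i) →
    ∀ (u : ℕ → ℕ), (∀ i ∈ I, 1 ≤ u i ∧ u i < g ^ h) →
    ∀ (L : ℕ), (∀ i ∈ I, L ≤ m i - h + 1) →
    (∑ i ∈ I, u i * g ^ (m i - h + 1)) ∈ AgSet g (W 0 ∩ Set.Ici L) := by
  classical
  intro I
  induction I using Finset.strongInduction with
  | _ I ihI =>
  intro hne h1 u hu L hL
  have h4 := fact_h4 hg ht hth
  have hbig : h + h + 2 ≤ g ^ (h+2) := fact_pow_big hg ht hth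
  set i₀ := I.min' hne with hi₀
  have hi₀I : i₀ ∈ I := I.min'_mem hne
  have hi₀1 : 1 ≤ i₀ := h1 i₀ hi₀I
  have hbig1 := m_one_big hg ht hth hm1
  have hmbig : h + h + 2 ≤ m i₀ := by
    have h5 : m 1 ≤ m i₀ := m_mono hg hm 1 i₀ (by omega) hi₀1
    omega
  have hshare : u i₀ * g ^ (m i₀ - h + 1) ∈ AgSet g {k : ℕ | (m i₀ - h + 1) ≤ k ∧ k ≤ (m i₀ - h + 1) + h - 1} :=
    agset_single hg (u i₀) (m i₀ - h + 1) h (hu i₀ hi₀I).1 (hu i₀ hi₀I).2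
  have hshare' : u i₀ * g ^ (m i₀ - h + 1) ∈ AgSet g {k : ℕ | k ∈ W 0 ∧ m i₀ - h + 1 ≤ k ∧ k ≤ m i₀} := by
    refine agset_mono ?_ hshare
    intro k hk
    simp only [Set.mem_setOf_eq] at hk ⊢
    refine ⟨?_, by omega, by omega⟩
    have hkm : k = m i₀ - (m i₀ - k) := by omega
    rw [hkm]
    exact run_mem hg ht hth hm hW0 hi₀1 (by omega)
  have hshareL : u i₀ * g ^ (m i₀ - h + 1) ∈ AgSet g (W 0 ∩ Set.Ici L) := by
    refine agset_mono ?_ hshare'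
    rintro k ⟨hkW, hk1, hk2⟩
    have := hL i₀ hi₀I
    exact ⟨hkW, by simp only [Set.mem_Ici]; omega⟩
  by_cases hrest : (I.erase i₀).Nonempty
  · have hsub : I.erase i₀ ⊂ I := Finset.erase_ssubset hi₀I
    have hrestmem : ∀ i ∈ I.erase i₀, m i₀ + 1 ≤ m i - h + 1 := by
      intro i hi
      have hiI := Finset.mem_of_mem_erase hi
      have hine : i ≠ i₀ := Finset.ne_of_mem_erase hi
      have higt : i₀ < i := by
        have := I.min'_le i hiI
        omega
      have hmono : m (i₀ + 1) ≤ m i := m_mono hg hm (i₀+1) i (by omega) (by omega)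
      have := hm i₀ hi₀1
      omega
    have hrestsum := ihI (I.erase i₀) hsub hrest
      (fun i hi => h1 i (Finset.mem_of_mem_erase hi)) u
      (fun i hi => hu i (Finset.mem_of_mem_erase hi)) (m i₀ + 1) hrestmem
    have hsum : ∑ i ∈ I, u i * g ^ (m i - h + 1)
        = u i₀ * g ^ (m i₀ - h + 1) + ∑ i ∈ I.erase i₀, u i * g ^ (m i - h + 1) :=
      (Finset.add_sum_erase I _ hi₀I).symm
    rw [hsum]
    have hcomb := agset_add (K := m i₀ + 1) hshare' hrestsum ?_ ?_
    · refine agset_mono ?_ hcomb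
      intro k hk
      have h7 := hL i₀ hi₀I
      rcases hk with ⟨hkW, hk1, hk2⟩ | ⟨hkW, hkI⟩
      · exact ⟨hkW, by simp only [Set.mem_Ici]; omega⟩
      · simp only [Set.mem_Ici] at hkI
        exact ⟨hkW, by simp only [Set.mem_Ici]; omega⟩
    · rintro k ⟨hkW, hk1, hk2⟩
      omega
    · rintro k ⟨hkW, hkI⟩
      simp only [Set.mem_Ici] at hkI
      omega
  · have hI1 : I = {i₀} := by
      have he : I.erase i₀ = ∅ := Finset.not_nonempty_iff_eq_empty.1 hrest
      apply Finset.eq_singleton_iff_unique_mem.2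
      refine ⟨hi₀I, fun x hx => ?_⟩
      by_contra hne'
      have hxmem : x ∈ I.erase i₀ := Finset.mem_erase.2 ⟨hne', hx⟩
      rw [he] at hxmem
      exact absurd hxmem (Finset.notMem_empty x)
    rw [hI1, Finset.sum_singleton]
    exact hshareL

end parts
end ctx


/-- Let `g ≥ 2`, `t ≥ 2` and `h` with `g ^ t ≤ h`, and let `(m i)` (for
`i ≥ 1`) satisfy `m 1 > g ^ (h + 2)` and `m (i + 1) - m i > g ^ (h + 2)`. With
`W 0 = [0, m 1] ∪ ⋃_{i ≥ 1} [m i + t + 1, m (i + 1)]` and, for `1 ≤ j ≤ h - 1`,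
`W j = ⋃_{i ≥ 1, i ≡ j mod (h-1)} [m i + 1, m i + t]`, and
`A = A_g(W 0) ∪ ⋯ ∪ A_g(W (h-1))`, every integer `n > m 2` belongs to `h(A \ {g ^ 2})`. -/
theorem stmt8 (g h t : ℕ) (hg : 2 ≤ g) (ht : 2 ≤ t) (hth : g ^ t ≤ h)
    (m : ℕ → ℕ) (hm1 : g ^ (h + 2) < m 1)
    (hm : ∀ i : ℕ, 1 ≤ i → m i + g ^ (h + 2) < m (i + 1))
    (W : ℕ → Set ℕ)
    (hW0 : W 0 = Set.Icc 0 (m 1) ∪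
      ⋃ i ∈ {i : ℕ | 1 ≤ i}, Set.Icc (m i + t + 1) (m (i + 1)))
    (hWj : ∀ j : ℕ, 1 ≤ j → j ≤ h - 1 →
      W j = ⋃ i ∈ {i : ℕ | 1 ≤ i ∧ i % (h - 1) = j % (h - 1)}, Set.Icc (m i + 1) (m i + t))
    (A : Set ℕ) (hA : A = ⋃ j ∈ Finset.range h, AgSet g (W j)) :
    ∀ n : ℕ, m 2 < n → n ∈ FoldSum h (A \ {g ^ 2}) := by
  intro n hn
  classical
  have h4 := fact_h4 hg ht hth
  have hbig := m_one_big hg ht hth hm1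
  have hg1 : 1 ≤ g := by omega
  have hm12 : m 1 + g ^ (h+2) < m 2 := hm 1 (le_refl 1)
  have hpow1 : 1 ≤ g ^ (h+2) := Nat.one_le_pow _ _ (by omega)
  have hgm_n : g ^ (h+2) < n := by omega
  -- digits
  set d : ℕ → ℕ := fun k => n / g ^ k % g with hd
  have hdub : ∀ k, d k ≤ g - 1 := by
    intro k
    have := Nat.mod_lt (n / g ^ k) (show 0 < g by omega)
    simp only [hd]
    omega
  have hnlt : n < g ^ (n+1) := by
    have h1 : n < 2 ^ (n+1) := lt_of_lt_of_le (Nat.lt_two_pow_self (n := n)) (Nat.pow_le_pow_right (by omega) (by omega))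
    exact lt_of_lt_of_le h1 (Nat.pow_le_pow_left hg _)
  set S := (Finset.range (n+1)).filter (fun k => d k ≠ 0) with hS
  have hnsum : n = ∑ k ∈ S, d k * g ^ k := by
    have h1 := digit_expand hg1 n (n+1) hnlt
    rw [hS]
    rw [Finset.sum_filter_of_ne (fun x _ hx => by intro h0; apply hx; rw [show d x = 0 from h0]; ring)]
    exact h1
  have hdS1 : ∀ k ∈ S, 1 ≤ d k := by
    intro k hk
    have := (Finset.mem_filter.1 hk).2
    omega
  have hkn : ∀ k ∈ S, k ≤ n := by
    intro k hk
    have := Finset.mem_range.1 (Finset.mem_filter.1 hk).1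
    omega
  have hd0 : ∀ k, k ≤ n → k ∉ S → d k = 0 := by
    intro k hk hkS
    by_contra hc
    exact hkS (Finset.mem_filter.2 ⟨Finset.mem_range.2 (by omega), hc⟩)
  have hSne : S.Nonempty := by
    rw [Finset.nonempty_iff_ne_empty]
    intro hc
    rw [hc] at hnsum
    simp at hnsum
    omega
  -- blocks
  set isB : ℕ → Prop := fun k => ∃ i, 1 ≤ i ∧ m i < k ∧ k ≤ m i + t with hisB
  set SB := S.filter (fun k => isB k) with hSB
  set S0 := S.filter (fun k => ¬ isB k) with hS0
  set S0' := S0.erase 2 with hS0'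
  set c := if 2 ∈ S then d 2 else 0 with hcdef
  set y2 := ∑ k ∈ S0', d k * g ^ k with hy2def
  have hc_ub : c ≤ g - 1 := by
    rw [hcdef]; split
    · exact hdub 2
    · omega
  have hblock_gt : ∀ k, isB k → m 1 < k := by
    rintro k ⟨i, hi, hlt, hle⟩
    have := m_mono hg hm 1 i (by omega) hi
    omega
  have h2notB : ¬ isB 2 := by
    intro hB
    have := hblock_gt 2 hB
    omega
  have hsplitS : ∑ k ∈ S, d k * g ^ k = (∑ k ∈ SB, d k * g ^ k) + ∑ k ∈ S0, d k * g ^ k := by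
    rw [hSB, hS0]
    exact (Finset.sum_filter_add_sum_filter_not S _ _).symm
  have h2S0 : 2 ∈ S0 ↔ 2 ∈ S := by
    rw [hS0]
    simp only [Finset.mem_filter]
    exact ⟨fun hx => hx.1, fun hx => ⟨hx, h2notB⟩⟩
  have hsplit0 : ∑ k ∈ S0, d k * g ^ k = y2 + c * g ^ 2 := by
    by_cases h2 : 2 ∈ S
    · rw [hy2def, hS0', hcdef, if_pos h2]
      rw [← Finset.add_sum_erase S0 _ (h2S0.2 h2)]
      omega
    · rw [hy2def, hS0', hcdef, if_neg h2]
      rw [Finset.erase_eq_of_notMem (fun hc => h2 (h2S0.1 hc))]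
      omega
  have hn3 : n = (∑ k ∈ SB, d k * g ^ k) + y2 + c * g ^ 2 := by omega
  have hS0'W : ∀ k ∈ S0', k ∈ W 0 := by
    intro k hk
    have hk0 : k ∈ S0 := Finset.mem_of_mem_erase hk
    have hkS : k ∈ S := Finset.mem_filter.1 hk0 |>.1
    have hknB : ¬ isB k := Finset.mem_filter.1 hk0 |>.2
    rcases le_or_gt k (m 1) with hle | hgt
    · exact W0_of_le hW0 hle
    · obtain ⟨i, hi, hlt, hle2⟩ := myexists_between hg ht hth hm1 hm hgt
      have hrun : m i + t < k := by
        by_contra hc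
        exact hknB ⟨i, hi, hlt, by omega⟩
      exact W0_of_run hW0 hi hrun hle2
  have hS0'ne2 : ∀ k ∈ S0', k ≠ 2 := fun k hk => Finset.ne_of_mem_erase hk
  -- block index
  have hbex : ∀ k, isB k → ∃ i, 1 ≤ i ∧ m i < k ∧ k ≤ m i + t := fun k hk => hk
  set bI : ℕ → ℕ := fun k => if hk : isB k then (hbex k hk).choose else 0 with hbIdef
  have hbI : ∀ k, isB k → 1 ≤ bI k ∧ m (bI k) < k ∧ k ≤ m (bI k) + t := by
    intro k hk
    have := (hbex k hk).choose_spec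
    rw [hbIdef]
    simp only [dif_pos hk]
    exact this
  set cls : ℕ → ℕ := fun k => if (bI k) % (h-1) = 0 then h - 1 else (bI k) % (h-1) with hclsdef
  have hclsW : ∀ k, isB k → k ∈ W (cls k) := by
    intro k hk
    obtain ⟨h1, h2, h3⟩ := hbI k hk
    exact mem_W_cls hg ht hth hWj h1 h2 h3
  have hcls_range : ∀ k, 1 ≤ cls k ∧ cls k ≤ h - 1 := by
    intro k
    exact cls_le hg ht hth
  have hsubA : AgSet g (W 0) ⊆ A := by
    rw [hA]
    intro x hx
    simp only [Finset.mem_range, Set.mem_iUnion]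
    exact ⟨0, by omega, hx⟩
  have hSB_gt : ∀ k ∈ SB, m 1 < k := by
    intro k hk
    exact hblock_gt k (Finset.mem_filter.1 hk).2
  by_cases hSBe : SB = ∅
  · -- CASE A : no block digits
    have hSBsum : ∑ k ∈ SB, d k * g ^ k = 0 := by rw [hSBe]; simp
    have hallnB : ∀ k ∈ S, ¬ isB k := by
      intro k hk hB
      have : k ∈ SB := Finset.mem_filter.2 ⟨hk, hB⟩
      rw [hSBe] at this
      exact absurd this (Finset.notMem_empty k)
    have hS0eq : S0 = S := by
      rw [hS0]
      exact Finset.filter_eq_self.2 hallnB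
    have hS0'eq : S0' = S.erase 2 := by rw [hS0', hS0eq]
    by_cases hSH : (S.filter (fun k => m 1 < k)) = ∅
    · -- CASE A-i
      have hallle : ∀ k ∈ S, k ≤ m 1 := by
        intro k hk
        by_contra hc
        have hmem : k ∈ S.filter (fun k => m 1 < k) := Finset.mem_filter.2 ⟨hk, by omega⟩
        rw [hSH] at hmem
        exact absurd hmem (Finset.notMem_empty k)
      set K := S.max' hSne with hK
      have hKS : K ∈ S := S.max'_mem hSne
      have hKub : ∀ k ∈ S, k ≤ K := fun k hk => S.le_max' k hk
      have hKm1 : K ≤ m 1 := hallle K hKS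
      have hnle : n + 1 ≤ g ^ (K+1) := by
        have h1 : ∑ k ∈ S, d k * g ^ k ≤ ∑ k ∈ S, (g-1) * g ^ k :=
          Finset.sum_le_sum (fun k _ => Nat.mul_le_mul_right _ (hdub k))
        have h2 : ∑ k ∈ S, (g-1) * g ^ k ≤ ∑ k ∈ Finset.range (K+1), (g-1) * g ^ k := by
          apply Finset.sum_le_sum_of_subset_of_nonneg
          · intro k hk
            exact Finset.mem_range.2 (by have := hKub k hk; omega)
          · intro _ _ _; exact Nat.zero_le _
        have h3 : (∑ k ∈ Finset.range (K+1), (g-1) * g ^ k) + 1 = g ^ (K+1) := by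
          have h4 := chain_sum (g := g) hg1 0 (K+1) (by omega)
          simpa using h4
        omega
      have hKge : h + 2 ≤ K := by
        by_contra hc
        have h5 : g ^ (K+1) ≤ g ^ (h+2) := Nat.pow_le_pow_right (by omega) (by omega)
        omega
      have hK2 : K ≠ 2 := by omega
      have hKS' : K ∈ S.erase 2 := Finset.mem_erase.2 ⟨hK2, hKS⟩
      have hpeel := peel_sum (g := g) (S.erase 2) d K hKS' (hdS1 K hKS)
      set rem := ∑ k ∈ S.erase 2, (if k = K then d k - 1 else d k) * g ^ k with hrem
      have hy2e : y2 = rem + g ^ K := by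
        have hy : y2 = ∑ k ∈ S.erase 2, d k * g ^ k := by rw [hy2def, hS0'eq]
        omega
      by_cases hrem0 : rem = 0
      · have hfin : n = g ^ K + c * g ^ 2 := by omega
        rw [hfin]
        exact chainFS hg ht hth hm1 hm hW0 hA h (by omega) K c (by omega)
          (fun l hl => W0_of_le hW0 (by omega)) hc_ub
      · have hfin : n = rem + (g ^ K + c * g ^ 2) := by omega
        rw [hfin]
        refine fold_congr (show 1 + (h-1) = h by omega)
          (fold_add (fold_one ?_) (chainFS hg ht hth hm1 hm hW0 hA (h-1) (by omega) K c (by omega)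
            (fun l hl => W0_of_le hW0 (by omega)) hc_ub))
        rw [hrem]
        apply part_mem hA (show 0 < h by omega)
        · intro k hk _
          exact W0_of_le hW0 (hallle k (Finset.mem_of_mem_erase hk))
        · intro k hk
          split
          · have := hdub k; omega
          · exact hdub k
        · by_contra hcon
          push_neg at hcon
          apply hrem0
          rw [hrem]
          exact Finset.sum_eq_zero (fun k hk => by rw [hcon k hk]; ring)
        · apply ne2low _ _ hg
          · intro k hk
            split
            · have := hdub k; omega
            · exact hdub k
          · intro k hk _
            exact Finset.ne_of_mem_erase hk
    · -- CASE A-ii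
      have hSHne : (S.filter (fun k => m 1 < k)).Nonempty := Finset.nonempty_iff_ne_empty.2 hSH
      set ks := (S.filter (fun k => m 1 < k)).min' hSHne with hks
      have hksmem := Finset.min'_mem _ hSHne
      have hksS : ks ∈ S := (Finset.mem_filter.1 hksmem).1
      have hksgt : m 1 < ks := (Finset.mem_filter.1 hksmem).2
      have hksmin : ∀ k ∈ S, m 1 < k → ks ≤ k := fun k hk hgt =>
        Finset.min'_le _ k (Finset.mem_filter.2 ⟨hk, hgt⟩)
      obtain ⟨i, hi, hilt, hile⟩ := myexists_between hg ht hth hm1 hm hksgt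
      have hknB : ¬ isB ks := hallnB ks hksS
      have hkrun : m i + t < ks := by
        by_contra hc
        exact hknB ⟨i, hi, hilt, by omega⟩
      have hm1i : m 1 ≤ m i := m_mono hg hm 1 i (by omega) hi
      set Q0 := Finset.Ico (m i + t + 1) ks with hQ0
      set QBf := Finset.Icc (m i + 1) (m i + t) with hQBf
      set β : ℕ → ℕ := fun k => if m i + t < k ∧ k < ks then g - 1 else if k = ks then d k - 1 else d k with hβ
      have hQ0S : ∀ k ∈ Q0, k ∉ S := by
        intro k hk hkS
        rw [hQ0] at hk
        have hb := Finset.mem_Ico.1 hk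
        have := hksmin k hkS (by omega)
        omega
      have hdisj : Disjoint (S.erase 2) Q0 := by
        rw [Finset.disjoint_right]
        intro k hk hk2
        exact hQ0S k hk (Finset.mem_of_mem_erase hk2)
      have hβS : ∀ k ∈ S.erase 2, β k * g ^ k = (if k = ks then d k - 1 else d k) * g ^ k := by
        intro k hk
        have hkS := Finset.mem_of_mem_erase hk
        simp only [hβ]
        by_cases hcase : m i + t < k ∧ k < ks
        · exfalso
          have := hksmin k hkS (by omega)
          omega
        · simp only [if_neg hcase]
      have hβQ : ∀ k ∈ Q0, β k * g ^ k = (g-1) * g ^ k := by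
        intro k hk
        rw [hQ0] at hk
        have hb := Finset.mem_Ico.1 hk
        simp only [hβ]
        rw [if_pos (⟨by omega, by omega⟩ : m i + t < k ∧ k < ks)]
      set rem' := ∑ k ∈ (S.erase 2) ∪ Q0, β k * g ^ k with hrem'
      set QBv := ∑ k ∈ QBf, (g-1) * g ^ k with hQBv
      set Q0v := ∑ k ∈ Q0, (g-1) * g ^ k with hQ0v
      have hrem'split : rem' = (∑ k ∈ S.erase 2, β k * g ^ k) + Q0v := by
        rw [hrem', Finset.sum_union hdisj, hQ0v]
        rw [Finset.sum_congr rfl hβQ]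
      have hks2 : ks ≠ 2 := by omega
      have hpeel := peel_sum (g := g) (S.erase 2) d ks (Finset.mem_erase.2 ⟨hks2, hksS⟩) (hdS1 ks hksS)
      have hsum1 : (∑ k ∈ S.erase 2, β k * g ^ k) + g ^ ks = ∑ k ∈ S.erase 2, d k * g ^ k := by
        rw [Finset.sum_congr rfl hβS]
        omega
      have hchain := chain_sum (g := g) hg1 (m i) ks (by omega)
      have hsplit1 : ((g-1) * g ^ (m i)) + QBv + Q0v = ∑ l ∈ Finset.Ico (m i) ks, (g-1) * g ^ l := by
        rw [← Finset.sum_Ico_consecutive (fun l => (g-1) * g ^ l) (by omega : m i ≤ m i + t + 1) (by omega : m i + t + 1 ≤ ks)]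
        rw [← Finset.sum_Ico_consecutive (fun l => (g-1) * g ^ l) (by omega : m i ≤ m i + 1) (by omega : m i + 1 ≤ m i + t + 1)]
        have hIco1 : ∑ l ∈ Finset.Ico (m i) (m i + 1), (g-1) * g ^ l = (g-1) * g ^ (m i) := by
          rw [Nat.Ico_succ_singleton]
          simp
        have hIco2 : Finset.Ico (m i + 1) (m i + t + 1) = QBf := by
          rw [hQBf, Finset.Ico_add_one_right_eq_Icc]
        rw [hIco1, hIco2, hQBv, hQ0v]
      have hE1 : (g-1) * g ^ (m i) + QBv + Q0v + g ^ (m i) = g ^ ks := by omega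
      have hy2e : y2 = ∑ k ∈ S.erase 2, d k * g ^ k := by rw [hy2def, hS0'eq]
      -- memberships of the fixed parts
      have hQBmem : QBv ∈ A \ {g ^ 2} := by
        rw [hQBv]
        have hjb := cls_le (i := i) hg ht hth
        apply part_mem (j := if i % (h-1) = 0 then h - 1 else i % (h-1)) hA (by omega)
        · intro k hk _
          have hb := Finset.mem_Icc.1 (by rw [hQBf] at hk; exact hk)
          exact mem_W_cls hg ht hth hWj hi (by omega) (by omega)
        · intro k _; exact le_refl _
        · refine ⟨m i + 1, ?_, by omega⟩
          rw [hQBf]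
          exact Finset.mem_Icc.2 ⟨le_refl _, by omega⟩
        · apply ne_of_gt
          apply val_ge3 (g := g) QBf (fun _ => g - 1) hg
            (show m i + 1 ∈ QBf by rw [hQBf]; exact Finset.mem_Icc.2 ⟨le_refl _, by omega⟩)
          · omega
          · omega
      have hGmem : (g-1) * g ^ (m i) ∈ A \ {g ^ 2} := by
        have hvs : (g-1) * g ^ (m i) = ∑ k ∈ ({m i} : Finset ℕ), (g-1) * g ^ k := by simp
        rw [hvs]
        apply part_mem hA (show 0 < h by omega)
        · intro k hk _
          rw [Finset.mem_singleton.1 hk]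
          have := run_mem hg ht hth hm hW0 hi (show 0 ≤ h - 1 by omega)
          simpa using this
        · intro k _; exact le_refl _
        · exact ⟨m i, Finset.mem_singleton_self _, by omega⟩
        · apply ne_of_gt
          apply val_ge3 (g := g) _ (fun _ => g - 1) hg (Finset.mem_singleton_self (m i))
          · omega
          · omega
      have hchainmem : ∀ s : ℕ, 1 ≤ s → s ≤ h →
          g ^ (m i) + c * g ^ 2 ∈ FoldSum s (A \ {g ^ 2}) := by
        intro s hs1 hs2
        apply chainFS hg ht hth hm1 hm hW0 hA s hs1 (m i) c (by omega)
          (fun l hl => run_mem hg ht hth hm hW0 hi (by omega)) hc_ub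
      by_cases hre : rem' = 0
      · have hfin : n = QBv + ((g-1) * g ^ (m i) + (g ^ (m i) + c * g ^ 2)) := by omega
        rw [hfin]
        exact fold_congr (show 1 + (1 + (h-2)) = h by omega)
          (fold_add (fold_one hQBmem) (fold_add (fold_one hGmem) (hchainmem (h-2) (by omega) (by omega))))
      · have hfin : n = rem' + (QBv + ((g-1) * g ^ (m i) + (g ^ (m i) + c * g ^ 2))) := by omega
        rw [hfin]
        refine fold_congr (show 1 + (1 + (1 + (h-3))) = h by omega)
          (fold_add (fold_one ?_) (fold_add (fold_one hQBmem) (fold_add (fold_one hGmem)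
            (hchainmem (h-3) (by omega) (by omega)))))
        rw [hrem']
        apply part_mem hA (show 0 < h by omega)
        · intro k hk _
          rcases Finset.mem_union.1 hk with hk1 | hk1
          · have : k ∈ S0' := by rw [hS0'eq]; exact hk1
            exact hS0'W k this
          · rw [hQ0] at hk1
            have hb := Finset.mem_Ico.1 hk1
            exact W0_of_run hW0 hi (by omega) (by omega)
        · intro k _
          simp only [hβ]
          split
          · exact le_refl _
          · split
            · have := hdub k; omega
            · exact hdub k
        · by_contra hcon
          push_neg at hcon
          apply hre
          rw [hrem']
          exact Finset.sum_eq_zero (fun k hk => by rw [hcon k hk]; ring)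
        · apply ne2low _ _ hg
          · intro k _
            simp only [hβ]
            split
            · exact le_refl _
            · split
              · have := hdub k; omega
              · exact hdub k
          · intro k hk hne
            rcases Finset.mem_union.1 hk with hk1 | hk1
            · exact Finset.ne_of_mem_erase hk1
            · rw [hQ0] at hk1
              have hb := Finset.mem_Ico.1 hk1
              omega

  · -- SB nonempty
    have hSBne : SB.Nonempty := Finset.nonempty_iff_ne_empty.2 hSBe
    by_cases hy2z : y2 = 0
    · -- CASE B : full replication
      set I := SB.image bI with hI
      have hIne : I.Nonempty := hSBne.image bI
      have hSBisB : ∀ k ∈ SB, isB k := fun k hk => (Finset.mem_filter.1 hk).2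
      have hI1 : ∀ i ∈ I, 1 ≤ i := by
        intro i hi
        obtain ⟨k, hk, rfl⟩ := Finset.mem_image.1 hi
        exact (hbI k (hSBisB k hk)).1
      set fib := fun i => SB.filter (fun k => bI k = i) with hfib
      set E := fun (i k : ℕ) => (k - m i) + (h - 1) with hE
      set U := fun i => ∑ k ∈ fib i, d k * g ^ (E i k) with hU
      have hfibmem : ∀ i, ∀ k ∈ fib i, m i < k ∧ k ≤ m i + t ∧ 1 ≤ d k := by
        intro i k hk
        obtain ⟨hkSB, hbik⟩ := Finset.mem_filter.1 hk
        have h5 := hbI k (hSBisB k hkSB)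
        rw [hbik] at h5
        exact ⟨h5.2.1, h5.2.2, hdS1 k (Finset.mem_filter.1 hkSB).1⟩
      have hmige : ∀ i ∈ I, m 1 ≤ m i := by
        intro i hi
        exact m_mono hg hm 1 i (by omega) (hI1 i hi)
      have hUval : ∀ i ∈ I, U i * g ^ (m i - h + 1) = ∑ k ∈ fib i, d k * g ^ k := by
        intro i hi
        simp only [hU]
        rw [Finset.sum_mul]
        apply Finset.sum_congr rfl
        intro k hk
        have h5 := hfibmem i k hk
        have h6 := hmige i hi
        rw [mul_assoc, ← pow_add]
        congr 2
        simp only [hE]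
        omega
      have hfibne : ∀ i ∈ I, (fib i).Nonempty := by
        intro i hi
        obtain ⟨k, hk, rfl⟩ := Finset.mem_image.1 hi
        exact ⟨k, Finset.mem_filter.2 ⟨hk, rfl⟩⟩
      have h2h : 2 * h ≤ 2 ^ h := by
        have h5 := (Nat.lt_two_pow_self (n := h-1))
        have h6 : 2 ^ h = 2 * 2 ^ (h-1) := by
          rw [← pow_succ']
          congr 1
          omega
        omega
      have hghge : 2 * h ≤ g ^ h := le_trans h2h (Nat.pow_le_pow_left hg h)
      have hUlb : ∀ i ∈ I, g ^ h ≤ U i := by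
        intro i hi
        obtain ⟨k₀, hk₀⟩ := hfibne i hi
        have h5 := hfibmem i k₀ hk₀
        calc g ^ h ≤ g ^ (E i k₀) := by
              apply Nat.pow_le_pow_right (by omega)
              simp only [hE]; omega
        _ ≤ d k₀ * g ^ (E i k₀) := Nat.le_mul_of_pos_left _ (by omega)
        _ ≤ U i := by
            simp only [hU]
            exact Finset.single_le_sum (f := fun k => d k * g ^ (E i k)) (fun _ _ => Nat.zero_le _) hk₀
      have hUub : ∀ i ∈ I, U i + g ^ h ≤ h * g ^ h := by
        intro i hi
        have hsub : fib i ⊆ Finset.Icc (m i + 1) (m i + t) := by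
          intro k hk
          have h5 := hfibmem i k hk
          exact Finset.mem_Icc.2 ⟨by omega, h5.2.1⟩
        have h6 : U i ≤ ∑ k ∈ Finset.Icc (m i + 1) (m i + t), (g-1) * g ^ (E i k) := by
          simp only [hU]
          calc ∑ k ∈ fib i, d k * g ^ (E i k) ≤ ∑ k ∈ fib i, (g-1) * g ^ (E i k) :=
                Finset.sum_le_sum (fun k _ => Nat.mul_le_mul_right _ (hdub k))
          _ ≤ _ := Finset.sum_le_sum_of_subset_of_nonneg hsub (fun _ _ _ => Nat.zero_le _)
        have h7 : ∑ k ∈ Finset.Icc (m i + 1) (m i + t), (g-1) * g ^ (E i k)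
            = ∑ l ∈ Finset.Ico h (h + t), (g-1) * g ^ l := by
          apply Finset.sum_nbij' (i := fun k => E i k) (j := fun l => l + m i + 1 - h)
          · intro k hk
            have hb := Finset.mem_Icc.1 hk
            simp only [hE]
            exact Finset.mem_Ico.2 ⟨by omega, by omega⟩
          · intro l hl
            have hb := Finset.mem_Ico.1 hl
            exact Finset.mem_Icc.2 ⟨by omega, by omega⟩
          · intro k hk
            have hb := Finset.mem_Icc.1 hk
            simp only [hE]
            omega
          · intro l hl
            have hb := Finset.mem_Ico.1 hl
            simp only [hE]
            omega
          · intro k hk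
            simp only [hE]
        have h8 : (∑ l ∈ Finset.Ico h (h+t), (g-1) * g ^ l) + g ^ h = g ^ (h+t) :=
          chain_sum hg1 h (h+t) (by omega)
        have h9 : g ^ (h+t) ≤ h * g ^ h := by
          calc g^(h+t) = g^h * g^t := pow_add g h t
          _ ≤ g^h * h := Nat.mul_le_mul_left _ hth
          _ = h * g^h := mul_comm _ _
        omega
      have hUdiv : ∀ i ∈ I, U i / h + 2 ≤ g ^ h := by
        intro i hi
        by_contra hcon
        push_neg at hcon
        have h5 : g ^ h - 1 ≤ U i / h := by omega
        have h10 : h * (g ^ h - 1) ≤ h * (U i / h) := Nat.mul_le_mul_left h h5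
        have h11 : h * (U i / h) ≤ U i := Nat.mul_div_le (U i) h
        have h12 : h * (g ^ h - 1) = h * g ^ h - h * 1 := by
          rw [Nat.mul_sub]
        have h13 : h * 1 = h := by ring
        have h14 : h ≤ h * g ^ h := Nat.le_mul_of_pos_right h (by positivity)
        have h15 := hUub i hi
        omega
      set u : ℕ → ℕ → ℕ := fun i p => U i / h + (if p < U i % h then 1 else 0) with hu
      have husum : ∀ i ∈ I, ∑ p ∈ Finset.range h, u i p = U i := by
        intro i hi
        simp only [hu]
        rw [Finset.sum_add_distrib]
        have h5 : ∑ _p ∈ Finset.range h, (U i / h) = h * (U i / h) := by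
          rw [Finset.sum_const, Finset.card_range, smul_eq_mul]
        have h7 : (Finset.range h).filter (fun p => p < U i % h) = Finset.range (U i % h) := by
          ext p
          simp only [Finset.mem_filter, Finset.mem_range]
          have := Nat.mod_lt (U i) (show 0 < h by omega)
          omega
        have h6 : (∑ p ∈ Finset.range h, if p < U i % h then 1 else 0) = U i % h := by
          rw [Finset.sum_boole, h7, Finset.card_range]
          simp
        rw [h5, h6]
        exact Nat.div_add_mod (U i) h
      have hub1 : ∀ i ∈ I, ∀ p : ℕ, 1 ≤ u i p ∧ u i p < g ^ h := by
        intro i hi p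
        have h5 := hUlb i hi
        have h6 : 1 ≤ U i / h := (Nat.one_le_div_iff (by omega)).2 (by omega)
        have h7 := hUdiv i hi
        simp only [hu]
        split <;> omega
      set p0 : Fin h := ⟨0, by omega⟩ with hp0def
      set x : Fin h → ℕ := fun p => (∑ i ∈ I, u i p.val * g ^ (m i - h + 1)) + (if p = p0 then c * g ^ 2 else 0) with hx
      refine ⟨x, ?_, ?_⟩
      · intro p
        have hbase : (∑ i ∈ I, u i p.val * g ^ (m i - h + 1)) ∈ AgSet g (W 0 ∩ Set.Ici 3) :=
          claimB hg ht hth hm1 hm hW0 I hIne hI1 (fun i => u i p.val)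
            (fun i hi => hub1 i hi p.val) 3 (fun i hi => by have := hmige i hi; omega)
        set i₀ := I.min' hIne with hi₀
        have hi₀I : i₀ ∈ I := I.min'_mem hIne
        have hxlb : g ^ 2 < x p := by
          have h5 : u i₀ p.val * g ^ (m i₀ - h + 1) ≤ ∑ i ∈ I, u i p.val * g ^ (m i - h + 1) :=
            Finset.single_le_sum (f := fun i => u i p.val * g ^ (m i - h + 1))
              (fun _ _ => Nat.zero_le _) hi₀I
          have h6 : g ^ 3 ≤ g ^ (m i₀ - h + 1) :=
            Nat.pow_le_pow_right (by omega) (by have := hmige i₀ hi₀I; omega)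
          have h7 : g ^ 2 < g ^ 3 := Nat.pow_lt_pow_right (by omega) (by omega)
          have h8 : g ^ (m i₀ - h + 1) ≤ u i₀ p.val * g ^ (m i₀ - h + 1) :=
            Nat.le_mul_of_pos_left _ (by have := hub1 i₀ hi₀I p.val; omega)
          have h9 : (∑ i ∈ I, u i p.val * g ^ (m i - h + 1)) ≤ x p := by
            simp only [hx]
            omega
          omega
        have hAg : x p ∈ AgSet g (W 0) := by
          simp only [hx]
          by_cases hp0 : p = p0
          · rw [if_pos hp0]
            by_cases hc0 : c = 0
            · rw [hc0]
              simp only [Nat.zero_mul, Nat.add_zero]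
              exact agset_mono (fun k hk => hk.1) hbase
            · have hcg : c * g ^ 2 ∈ AgSet g {2} := by
                refine ⟨{2}, ⟨2, Finset.mem_singleton_self 2⟩, by simp, fun _ => c,
                  fun k hk => ⟨by show 1 ≤ c; omega, hc_ub⟩, by simp⟩
              have hadd := agset_add (K := 3) hcg hbase
                (fun k hk => by rw [Set.mem_singleton_iff] at hk; omega)
                (fun k hk => hk.2)
              rw [add_comm]
              refine agset_mono ?_ hadd
              rintro k (hk | hk)
              · rw [Set.mem_singleton_iff] at hk
                rw [hk]
                exact two_in_W0 hg ht hth hm1 hW0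
              · exact hk.1
          · rw [if_neg hp0]
            simp only [Nat.add_zero]
            exact agset_mono (fun k hk => hk.1) hbase
        refine ⟨hsubA hAg, ?_⟩
        simp only [Set.mem_singleton_iff]
        omega
      · -- the sum equals n
        have hswap : ∑ p : Fin h, x p
            = (∑ i ∈ I, (∑ p ∈ Finset.range h, u i p) * g ^ (m i - h + 1)) + c * g ^ 2 := by
          simp only [hx]
          rw [Finset.sum_add_distrib]
          congr 1
          · rw [Finset.sum_comm]
            apply Finset.sum_congr rfl
            intro i _
            rw [Finset.sum_mul]
            exact Fin.sum_univ_eq_sum_range (fun p => u i p * g ^ (m i - h + 1)) h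
          · rw [Finset.sum_ite_eq' Finset.univ p0 (fun _ => c * g ^ 2)]
            rw [if_pos (Finset.mem_univ _)]
        rw [hswap]
        have h5 : ∀ i ∈ I, (∑ p ∈ Finset.range h, u i p) * g ^ (m i - h + 1) = ∑ k ∈ fib i, d k * g ^ k := by
          intro i hi
          rw [husum i hi]
          exact hUval i hi
        rw [Finset.sum_congr rfl h5]
        have h6 : ∑ i ∈ I, ∑ k ∈ fib i, d k * g ^ k = ∑ k ∈ SB, d k * g ^ k := by
          simp only [hfib, hI]
          exact Finset.sum_fiberwise_of_maps_to (fun k hk => Finset.mem_image_of_mem bI hk) _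
        rw [h6]
        omega
    · -- CASE C
      set T := (Finset.Icc 1 (h-1)).filter (fun j => (SB.filter (fun k => cls k = j)).Nonempty) with hT
      set cv := fun j => ∑ k ∈ SB.filter (fun k => cls k = j), d k * g ^ k with hcv
      have hSBisB : ∀ k ∈ SB, isB k := fun k hk => (Finset.mem_filter.1 hk).2
      have hfibsum : ∑ j ∈ Finset.Icc 1 (h-1), cv j = ∑ k ∈ SB, d k * g ^ k := by
        simp only [hcv]
        exact Finset.sum_fiberwise_of_maps_to
          (fun k _ => Finset.mem_Icc.2 ⟨(hcls_range k).1, (hcls_range k).2⟩) _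
      have hTsum : ∑ j ∈ T, cv j = ∑ k ∈ SB, d k * g ^ k := by
        rw [← hfibsum]
        apply Finset.sum_subset (Finset.filter_subset _ _)
        intro j hj hjT
        simp only [hT, Finset.mem_filter, hj, true_and] at hjT
        simp only [hcv]
        rw [Finset.not_nonempty_iff_eq_empty.1 hjT]
        simp
      have hr_le : T.card ≤ h - 1 := by
        calc T.card ≤ (Finset.Icc 1 (h-1)).card := Finset.card_filter_le _ _
        _ = h - 1 := by rw [Nat.card_Icc]; omega
      have hcv_mem : ∀ j ∈ T, cv j ∈ A \ {g ^ 2} := by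
        intro j hj
        obtain ⟨hjI, hjne⟩ := Finset.mem_filter.1 hj
        have hjb := Finset.mem_Icc.1 hjI
        obtain ⟨k₀, hk₀⟩ := hjne
        have hk₀f := Finset.mem_filter.1 hk₀
        simp only [hcv]
        apply part_mem (j := j) hA (by omega)
        · intro k hk _
          have hkf := Finset.mem_filter.1 hk
          have h5 := hclsW k (hSBisB k hkf.1)
          rw [hkf.2] at h5
          exact h5
        · intro k _; exact hdub k
        · exact ⟨k₀, hk₀, by have := hdS1 k₀ (Finset.mem_filter.1 hk₀f.1).1; omega⟩
        · apply ne_of_gt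
          apply val_ge3 (g := g) _ d hg hk₀
          · have := hdS1 k₀ (Finset.mem_filter.1 hk₀f.1).1; omega
          · have := hSB_gt k₀ hk₀f.1; omega
      have hy2ex : ∃ k ∈ S0', d k ≠ 0 := by
        by_contra hcon
        push_neg at hcon
        apply hy2z
        rw [hy2def]
        exact Finset.sum_eq_zero (fun k hk => by rw [hcon k hk]; ring)
      by_cases hr : T.card = h - 1
      · -- C1 : all classes occupied, y2 attached with c g^2 forms the last part
        set Fy := insert 2 S0' with hFy
        set γy : ℕ → ℕ := fun k => if k = 2 then c else d k with hγy
        have h2nS0' : 2 ∉ S0' := fun hc2 => (hS0'ne2 2 hc2) rfl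
        have hyval : ∑ k ∈ Fy, γy k * g ^ k = c * g ^ 2 + y2 := by
          rw [hFy, Finset.sum_insert h2nS0']
          simp only [hγy]
          rw [if_true]
          congr 1
          rw [hy2def]
          apply Finset.sum_congr rfl
          intro k hk
          rw [if_neg (hS0'ne2 k hk)]
        have hymem : (∑ k ∈ Fy, γy k * g ^ k) ∈ A \ {g^2} := by
          apply part_mem hA (show 0 < h by omega)
          · intro k hk _
            rcases Finset.mem_insert.1 hk with rfl | hk2
            · exact two_in_W0 hg ht hth hm1 hW0
            · exact hS0'W k hk2
          · intro k _
            simp only [hγy]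
            split
            · exact hc_ub
            · exact hdub k
          · obtain ⟨k, hk, hdk⟩ := hy2ex
            refine ⟨k, Finset.mem_insert_of_mem hk, ?_⟩
            simp only [hγy]
            rw [if_neg (hS0'ne2 k hk)]
            exact hdk
          · rw [hyval]
            by_cases hc0 : c = 0
            · rw [hc0]
              simp only [Nat.zero_mul, Nat.zero_add]
              rw [hy2def]
              apply ne2low _ _ hg (fun k _ => hdub k)
              intro k hk _
              exact hS0'ne2 k hk
            · have h5 : g ^ 2 ≤ c * g ^ 2 := Nat.le_mul_of_pos_left _ (by omega)
              have h6 : 1 ≤ y2 := by omega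
              omega
        have hfin : n = (∑ j ∈ T, cv j) + ∑ k ∈ Fy, γy k * g ^ k := by omega
        rw [hfin]
        exact fold_congr (show T.card + 1 = h by omega)
          (fold_add (fold_finset T cv hcv_mem) (fold_one hymem))
      · -- C2 : fewer classes, peel a unit from the lowest block digit
        have hrle2 : T.card ≤ h - 2 := by omega
        set k2 := SB.min' hSBne with hk2def
        have hk2SB : k2 ∈ SB := SB.min'_mem hSBne
        have hk2min : ∀ k ∈ SB, k2 ≤ k := fun k hk => SB.min'_le k hk
        have hk2B : isB k2 := hSBisB k2 hk2SB
        have hk2S : k2 ∈ S := (Finset.mem_filter.1 hk2SB).1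
        obtain ⟨hi2_1, hi2_lt, hi2_le⟩ := hbI k2 hk2B
        set i2 := bI k2 with hi2
        set M := m i2 with hM
        have hm1M : m 1 ≤ M := m_mono hg hm 1 i2 (by omega) hi2_1
        have hk2n : k2 ≤ n := hkn k2 hk2S
        have hMbig : h + h + 2 < M := by omega
        set QB := Finset.Ico (M+1) k2 with hQB
        set α : ℕ → ℕ := fun k => if M < k ∧ k < k2 then g - 1 else if k = k2 then d k - 1 else d k with hα
        have hQBnS : ∀ k ∈ QB, k ∉ S := by
          intro k hk hkS
          have hb := Finset.mem_Ico.1 hk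
          have hkB : isB k := ⟨i2, hi2_1, by omega, by omega⟩
          have h5 : k ∈ SB := Finset.mem_filter.2 ⟨hkS, hkB⟩
          have := hk2min k h5
          omega
        have hdisj : Disjoint SB QB := by
          rw [Finset.disjoint_right]
          intro k hk hk2'
          exact hQBnS k hk (Finset.mem_filter.1 hk2' |>.1)
        set GB := SB ∪ QB with hGB
        have hGB_B : ∀ k ∈ GB, isB k ∧ m 1 < k := by
          intro k hk
          rcases Finset.mem_union.1 hk with hk1 | hk1
          · exact ⟨hSBisB k hk1, hSB_gt k hk1⟩
          · have hb := Finset.mem_Ico.1 hk1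
            exact ⟨⟨i2, hi2_1, by omega, by omega⟩, by omega⟩
        have hQBcls : ∀ k ∈ QB, cls k = cls k2 := by
          intro k hk
          have hb := Finset.mem_Ico.1 hk
          have hkB : isB k := ⟨i2, hi2_1, by omega, by omega⟩
          obtain ⟨hb1, hb2, hb3⟩ := hbI k hkB
          have h5 : bI k = i2 := block_unique hg ht hth hm hb1 hi2_1 hb2 hb3 (by omega) (by omega)
          simp only [hclsdef]
          rw [h5, hi2]
        set GBnz := GB.filter (fun k => α k ≠ 0) with hGBnz
        set fib2 := fun j => GBnz.filter (fun k => cls k = j) with hfib2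
        set v := fun j => ∑ k ∈ fib2 j, α k * g ^ k with hv
        set T2 := (Finset.Icc 1 (h-1)).filter (fun j => (fib2 j).Nonempty) with hT2
        have hvfib : ∑ j ∈ Finset.Icc 1 (h-1), v j = ∑ k ∈ GBnz, α k * g ^ k := by
          simp only [hv, hfib2]
          exact Finset.sum_fiberwise_of_maps_to
            (fun k _ => Finset.mem_Icc.2 ⟨(hcls_range k).1, (hcls_range k).2⟩) _
        have hT2sum : ∑ j ∈ T2, v j = ∑ k ∈ GBnz, α k * g ^ k := by
          rw [← hvfib]
          apply Finset.sum_subset (Finset.filter_subset _ _)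
          intro j hj hjT
          simp only [hT2, Finset.mem_filter, hj, true_and] at hjT
          simp only [hv]
          rw [Finset.not_nonempty_iff_eq_empty.1 hjT]
          simp
        have hGBnzsum : ∑ k ∈ GBnz, α k * g ^ k = ∑ k ∈ GB, α k * g ^ k := by
          rw [hGBnz]
          exact Finset.sum_filter_of_ne (fun x _ hx => fun h0 => hx (by rw [h0]; ring))
        have hαSB : ∀ k ∈ SB, α k * g ^ k = (if k = k2 then d k - 1 else d k) * g ^ k := by
          intro k hk
          have := hk2min k hk
          simp only [hα]
          rw [if_neg (by omega : ¬(M < k ∧ k < k2))]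
        have hαQB : ∀ k ∈ QB, α k * g ^ k = (g-1) * g ^ k := by
          intro k hk
          have hb := Finset.mem_Ico.1 hk
          simp only [hα]
          rw [if_pos (⟨by omega, by omega⟩ : M < k ∧ k < k2)]
        have hpeel := peel_sum (g := g) SB d k2 hk2SB (hdS1 k2 hk2S)
        have hQchain := chain_sum (g := g) hg1 (M+1) k2 (by omega)
        have hkey : (∑ j ∈ T2, v j) + g ^ (M+1) = ∑ k ∈ SB, d k * g ^ k := by
          rw [hT2sum, hGBnzsum, hGB, Finset.sum_union hdisj]
          rw [Finset.sum_congr rfl hαSB, Finset.sum_congr rfl hαQB, hQB]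
          omega
        have hT2T : T2 ⊆ T := by
          intro j hj
          obtain ⟨hjI, ⟨k, hk⟩⟩ := Finset.mem_filter.1 hj
          have hkf := Finset.mem_filter.1 hk
          have hkGB := Finset.mem_filter.1 hkf.1
          refine Finset.mem_filter.2 ⟨hjI, ?_⟩
          rcases Finset.mem_union.1 hkGB.1 with hk1 | hk1
          · exact ⟨k, Finset.mem_filter.2 ⟨hk1, hkf.2⟩⟩
          · refine ⟨k2, Finset.mem_filter.2 ⟨hk2SB, ?_⟩⟩
            rw [← hQBcls k hk1]
            exact hkf.2
        have hr2 : T2.card ≤ h - 2 := le_trans (Finset.card_le_card hT2T) hrle2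
        set p := h - T2.card with hp
        have hp2 : 2 ≤ p := by omega
        have hv_mem : ∀ j ∈ T2, v j ∈ A \ {g^2} := by
          intro j hj
          obtain ⟨hjI, hjne⟩ := Finset.mem_filter.1 hj
          have hjb := Finset.mem_Icc.1 hjI
          obtain ⟨k₀, hk₀⟩ := hjne
          simp only [hv]
          apply part_mem (j := j) hA (by omega)
          · intro k hk _
            have hkf := Finset.mem_filter.1 hk
            have hkGB := (Finset.mem_filter.1 hkf.1).1
            have h5 := hclsW k (hGB_B k hkGB).1
            rw [hkf.2] at h5
            exact h5
          · intro k _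
            simp only [hα]
            split
            · exact le_refl _
            · split
              · have := hdub k; omega
              · exact hdub k
          · exact ⟨k₀, hk₀, (Finset.mem_filter.1 (Finset.mem_filter.1 hk₀).1).2⟩
          · apply ne_of_gt
            have hk₀GB := (Finset.mem_filter.1 (Finset.mem_filter.1 hk₀).1).1
            apply val_ge3 (g := g) _ α hg hk₀
            · exact (Finset.mem_filter.1 (Finset.mem_filter.1 hk₀).1).2
            · have := (hGB_B k₀ hk₀GB).2; omega
        have hy2mem : y2 ∈ A \ {g^2} := by
          rw [hy2def]
          apply part_mem hA (show 0 < h by omega)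
          · intro k hk _; exact hS0'W k hk
          · intro k _; exact hdub k
          · exact hy2ex
          · apply ne2low _ _ hg (fun k _ => hdub k)
            intro k hk _
            exact hS0'ne2 k hk
        have hnotB : ∀ l, l ≤ h - 1 → ¬ isB (M - l) := by
          intro l hl hB
          exact run_not_block hg ht hth hm1 hm hi2_1 hl hB
        have hrunM : ∀ l, l ≤ h - 1 → (M - l) ∈ W 0 := by
          intro l hl
          exact run_mem hg ht hth hm hW0 hi2_1 hl
        have hGmem : (g-1) * g ^ M ∈ A \ {g^2} := by
          have hvs : (g-1) * g ^ M = ∑ k ∈ ({M} : Finset ℕ), (g-1) * g ^ k := by simp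
          rw [hvs]
          apply part_mem hA (show 0 < h by omega)
          · intro k hk _
            rw [Finset.mem_singleton.1 hk]
            have h5 := hrunM 0 (by omega)
            simpa using h5
          · intro k _; exact le_refl _
          · exact ⟨M, Finset.mem_singleton_self _, by omega⟩
          · apply ne_of_gt
            apply val_ge3 (g := g) _ (fun _ => g - 1) hg (Finset.mem_singleton_self M)
            · omega
            · omega
        have hchainM : ∀ s : ℕ, 1 ≤ s → s ≤ h → g ^ M + c * g ^ 2 ∈ FoldSum s (A \ {g^2}) := by
          intro s hs1 hs2
          exact chainFS hg ht hth hm1 hm hW0 hA s hs1 M c (by omega)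
            (fun l hl => hrunM l (by omega)) hc_ub
        have hsplitM : (g-1) * g ^ M + g ^ M = g ^ (M+1) := by
          have h5 : (g-1) * g ^ M + g ^ M = g * g ^ M := by
            obtain ⟨s', rfl⟩ : ∃ s', g = s' + 1 := ⟨g - 1, by omega⟩
            simp [Nat.add_sub_cancel]
            ring
          rw [h5, ← pow_succ']
        by_cases hp3 : 3 ≤ p
        · -- C2a
          have hfin : n = (∑ j ∈ T2, v j) + (y2 + ((g-1) * g ^ M + (g ^ M + c * g ^ 2))) := by omega
          rw [hfin]
          exact fold_congr (show T2.card + (1 + (1 + (p-2))) = h by omega)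
            (fold_add (fold_finset T2 v hv_mem) (fold_add (fold_one hy2mem)
              (fold_add (fold_one hGmem) (hchainM (p-2) (by omega) (by omega)))))
        · -- p = 2
          have hp2' : p = 2 := by omega
          by_cases hw : ∃ w, M - (h-1) ≤ w ∧ w ≤ M ∧ d w ≤ g - 2
          · -- C2bc : cascade split into two W0 parts
            set Wf := (Finset.Icc (M - (h-1)) M).filter (fun w => d w ≤ g - 2) with hWf
            have hWfne : Wf.Nonempty := by
              obtain ⟨w, hw1, hw2, hw3⟩ := hw
              exact ⟨w, Finset.mem_filter.2 ⟨Finset.mem_Icc.2 ⟨hw1, hw2⟩, hw3⟩⟩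
            set ws := Wf.max' hWfne with hwsdef
            have hwsmem := Wf.max'_mem hWfne
            have hwsI := Finset.mem_Icc.1 (Finset.mem_filter.1 hwsmem).1
            have hwsd : d ws ≤ g - 2 := (Finset.mem_filter.1 hwsmem).2
            have hws3 : 3 ≤ ws := by omega
            set pa := ∑ l ∈ Finset.Icc ws M, (g-1) * g ^ l with hpadef
            have hpachain : pa + g ^ ws = g ^ (M+1) := by
              rw [hpadef, ← Finset.Ico_add_one_right_eq_Icc]
              exact chain_sum hg1 ws (M+1) (by omega)
            have hpamem : pa ∈ A \ {g^2} := by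
              rw [hpadef]
              apply part_mem hA (show 0 < h by omega)
              · intro l hl _
                have hb := Finset.mem_Icc.1 hl
                have h6 : l = M - (M - l) := by omega
                rw [h6]
                exact hrunM (M - l) (by omega)
              · intro k _; exact le_refl _
              · exact ⟨M, Finset.mem_Icc.2 ⟨by omega, le_refl _⟩, by omega⟩
              · apply ne_of_gt
                apply val_ge3 (g := g) _ (fun _ => g-1) hg
                  (Finset.mem_Icc.2 ⟨le_refl ws, by omega⟩)
                · omega
                · omega
            set Fb := insert 2 (insert ws S0') with hFb
            set γ : ℕ → ℕ := fun k => if k = 2 then c else if k = ws then d ws + 1 else d k with hγ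
            have hwsne2 : ws ≠ 2 := by omega
            have h2ni : 2 ∉ insert ws S0' := by
              intro hc2
              rcases Finset.mem_insert.1 hc2 with h5 | h5
              · exact hwsne2 h5.symm
              · exact hS0'ne2 2 h5 rfl
            have hwsnB : ¬ isB ws := by
              intro hB
              have heq : ws = M - (M - ws) := by omega
              rw [heq] at hB
              exact hnotB (M - ws) (by omega) hB
            have hwsW0 : ws ∈ W 0 := by
              have h5 := hrunM (M - ws) (by omega)
              have heq : M - (M - ws) = ws := by omega
              rw [heq] at h5
              exact h5
            have hbump : (∑ k ∈ insert ws S0', (if k = ws then d ws + 1 else d k) * g ^ k) = y2 + g ^ ws := by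
              by_cases hwsS : ws ∈ S0'
              · rw [Finset.insert_eq_self.2 hwsS]
                have h5 : (∑ k ∈ S0', (if k = ws then d ws + 1 else d k) * g ^ k)
                    = (d ws + 1) * g ^ ws + ∑ k ∈ S0'.erase ws, d k * g ^ k := by
                  rw [← Finset.add_sum_erase _ _ hwsS]
                  rw [if_pos rfl]
                  congr 1
                  apply Finset.sum_congr rfl
                  intro k hk
                  rw [if_neg (Finset.ne_of_mem_erase hk)]
                have h6 : y2 = d ws * g ^ ws + ∑ k ∈ S0'.erase ws, d k * g ^ k := by
                  rw [hy2def, ← Finset.add_sum_erase _ _ hwsS]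
                have h7 : (d ws + 1) * g ^ ws = d ws * g ^ ws + g ^ ws := by ring
                omega
              · have hd0ws : d ws = 0 := by
                  apply hd0 ws (by omega)
                  intro hwsS2
                  apply hwsS
                  rw [hS0']
                  refine Finset.mem_erase.2 ⟨hwsne2, ?_⟩
                  rw [hS0]
                  exact Finset.mem_filter.2 ⟨hwsS2, hwsnB⟩
                rw [Finset.sum_insert hwsS, if_pos rfl]
                have h5 : (∑ k ∈ S0', (if k = ws then d ws + 1 else d k) * g ^ k) = y2 := by
                  rw [hy2def]
                  apply Finset.sum_congr rfl
                  intro k hk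
                  rw [if_neg (by rintro rfl; exact hwsS hk)]
                rw [h5, hd0ws]
                omega
            have hpbval : ∑ k ∈ Fb, γ k * g ^ k = c * g ^ 2 + (y2 + g ^ ws) := by
              rw [hFb, Finset.sum_insert h2ni]
              simp only [hγ]
              rw [if_true]
              congr 1
              rw [← hbump]
              apply Finset.sum_congr rfl
              intro k hk
              have hkne2 : k ≠ 2 := by
                rintro rfl; exact h2ni hk
              rw [if_neg hkne2]
            have hpbmem : (∑ k ∈ Fb, γ k * g ^ k) ∈ A \ {g^2} := by
              apply part_mem hA (show 0 < h by omega)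
              · intro k hk _
                rcases Finset.mem_insert.1 hk with rfl | hk2
                · exact two_in_W0 hg ht hth hm1 hW0
                · rcases Finset.mem_insert.1 hk2 with rfl | hk3
                  · exact hwsW0
                  · exact hS0'W k hk3
              · intro k _
                simp only [hγ]
                split
                · exact hc_ub
                · split
                  · omega
                  · exact hdub k
              · refine ⟨ws, Finset.mem_insert_of_mem (Finset.mem_insert_self _ _), ?_⟩
                simp only [hγ]
                rw [if_neg hwsne2, if_true]
                omega
              · apply ne_of_gt
                apply val_ge3 (g := g) _ γ hg
                  (Finset.mem_insert_of_mem (Finset.mem_insert_self ws S0'))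
                · simp only [hγ]
                  rw [if_neg hwsne2, if_true]
                  omega
                · omega
            have hfin : n = (∑ j ∈ T2, v j) + (pa + ∑ k ∈ Fb, γ k * g ^ k) := by omega
            rw [hfin]
            exact fold_congr (show T2.card + (1 + 1) = h by omega)
              (fold_add (fold_finset T2 v hv_mem) (fold_add (fold_one hpamem) (fold_one hpbmem)))
          · -- C2d : the run below M is full of digits g-1
            push_neg at hw
            have hfull : ∀ w, M - (h-1) ≤ w → w ≤ M → d w = g - 1 := by
              intro w h5 h6
              have h7 := hw w h5 h6
              have h8 := hdub w
              omega
            have hrT : T.card = h - 2 := by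
              have h5 := Finset.card_le_card hT2T
              omega
            have hmemS0' : ∀ w, M - 1 ≤ w → w ≤ M → w ∈ S0' := by
              intro w h5 h6
              have h7 : d w = g - 1 := hfull w (by omega) h6
              have h8 : w ∈ S := Finset.mem_filter.2
                ⟨Finset.mem_range.2 (by omega), by omega⟩
              have h9 : ¬ isB w := by
                intro hB
                have heq : w = M - (M - w) := by omega
                rw [heq] at hB
                exact hnotB (M - w) (by omega) hB
              rw [hS0']
              refine Finset.mem_erase.2 ⟨by omega, ?_⟩
              rw [hS0]
              exact Finset.mem_filter.2 ⟨h8, h9⟩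
            have hMS0' : M ∈ S0' := hmemS0' M (by omega) (le_refl M)
            have hM1S0' : (M-1) ∈ S0' := hmemS0' (M-1) (le_refl _) (by omega)
            have hpeelM := peel_sum (g := g) S0' d M hMS0'
              (by have := hfull M (by omega) (le_refl M); omega)
            set paM := ∑ k ∈ S0', (if k = M then d k - 1 else d k) * g ^ k with hpaMdef
            have hpaMmem : paM ∈ A \ {g^2} := by
              rw [hpaMdef]
              apply part_mem hA (show 0 < h by omega)
              · intro k hk _; exact hS0'W k hk
              · intro k _
                split
                · have := hdub k; omega
                · exact hdub k
              · refine ⟨M-1, hM1S0', ?_⟩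
                rw [if_neg (by omega : ¬(M-1 = M))]
                have := hfull (M-1) (by omega) (by omega)
                omega
              · apply ne2low _ _ hg
                · intro k _
                  split
                  · have := hdub k; omega
                  · exact hdub k
                · intro k hk _
                  exact hS0'ne2 k hk
            have hy2peel : y2 = paM + g ^ M := by
              rw [hy2def]
              exact hpeelM
            have hfin : n = (∑ j ∈ T, cv j) + (paM + (g ^ M + c * g ^ 2)) := by omega
            rw [hfin]
            exact fold_congr (show T.card + (1 + 1) = h by omega)
              (fold_add (fold_finset T cv hcv_mem)
                (fold_add (fold_one hpaMmem) (hchainM 1 (by omega) (by omega))))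
end

section
/- Let g ≥ 2, h, and t be positive integers with h > g^t(g−1), and let m be an integer with g^m > g^{t+2} h. Define W_0 = {mk + j : k ∈ ℕ, 0 ≤ j ≤ m−t−1}. Then every integer n ≥ h belongs to the h-fold sumset hA_g(W_0); in particular, A_g(W_0) is an asymptotic basis of order h. -/
lemma digits_sum (g v : ℕ) : ∀ M : ℕ, ∑ p ∈ Finset.range M, (v / g ^ p % g) * g ^ p = v % g ^ M := by
  intro M
  induction M with
  | zero => simp [Nat.mod_one]
  | succ M ih =>
    rw [Finset.sum_range_succ, ih, pow_succ, Nat.mod_mul]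
    ring

lemma sum_blocks (g m : ℕ) (hm : 0 < m) (b : ℕ → ℕ) :
    ∀ N : ℕ, ∑ x ∈ Finset.range (m * N), (b (x / m) / g ^ (x % m) % g) * g ^ x
      = ∑ j ∈ Finset.range N, (b j % g ^ m) * (g ^ m) ^ j := by
  intro N
  induction N with
  | zero => simp
  | succ N ih =>
    have h1 : m * (N + 1) = m * N + m := by ring
    rw [Finset.sum_range_succ, ← ih, h1, Finset.range_eq_Ico,
      ← Finset.sum_Ico_consecutive _ (Nat.zero_le (m * N)) (Nat.le_add_right (m * N) m)]
    congr 1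
    · rw [Finset.range_eq_Ico]
    rw [Finset.sum_Ico_eq_sum_range]
    have h2 : m * N + m - m * N = m := by omega
    rw [h2]
    have h3 : ∀ p ∈ Finset.range m,
        (b ((m * N + p) / m) / g ^ ((m * N + p) % m) % g) * g ^ (m * N + p)
          = ((b N / g ^ p % g) * g ^ p) * (g ^ m) ^ N := by
      intro p hp
      rw [Finset.mem_range] at hp
      have hdiv : (m * N + p) / m = N := by
        rw [Nat.mul_add_div hm]
        simp [Nat.div_eq_of_lt hp]
      have hmod : (m * N + p) % m = p := by
        rw [Nat.mul_add_mod]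
        exact Nat.mod_eq_of_lt hp
      rw [hdiv, hmod, pow_add, ← pow_mul]
      ring
    rw [Finset.sum_congr rfl h3, ← Finset.sum_mul, digits_sum]

/-- `v` is a sum `∑_{j ≤ K} b j * (g^m)^j` with block digits `b j < g^(m-t)`. -/
def BRep (g m t K v : ℕ) : Prop :=
  ∃ b : ℕ → ℕ, (∀ j, b j < g ^ (m - t)) ∧ v = ∑ j ∈ Finset.range (K + 1), b j * (g ^ m) ^ j

lemma rep_mono {g m t K v : ℕ} (hg : 0 < g) (h : BRep g m t K v) : BRep g m t (K + 1) v := by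
  obtain ⟨b, hb, hv⟩ := h
  refine ⟨fun j => if j < K + 1 then b j else 0, fun j => ?_, ?_⟩
  · dsimp only
    split
    · exact hb j
    · exact Nat.pow_pos hg
  · rw [Finset.sum_range_succ]
    simp only [Nat.lt_irrefl, if_false, zero_mul, add_zero]
    rw [hv]
    refine Finset.sum_congr rfl fun j hj => ?_
    rw [Finset.mem_range] at hj
    simp [hj]

lemma rep_add_top {g m t K v c : ℕ} (hc : c < g ^ (m - t)) (h : BRep g m t K v) :
    BRep g m t (K + 1) (v + c * (g ^ m) ^ (K + 1)) := by
  obtain ⟨b, hb, hv⟩ := h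
  refine ⟨fun j => if j = K + 1 then c else b j, fun j => ?_, ?_⟩
  · dsimp only; split
    · exact hc
    · exact hb j
  · rw [Finset.sum_range_succ]
    simp only [if_pos rfl]
    congr 1
    rw [hv]
    refine Finset.sum_congr rfl fun j hj => ?_
    rw [Finset.mem_range] at hj
    have : j ≠ K + 1 := by omega
    simp [this]

lemma rep_mem {g m t K v : ℕ} (hg : 2 ≤ g) (ht : 1 ≤ t) (htm : t + 1 ≤ m)
    (hv : 1 ≤ v) (hrep : BRep g m t K v) :
    v ∈ AgSet g {x : ℕ | ∃ k j : ℕ, j ≤ m - t - 1 ∧ x = m * k + j} := by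
  obtain ⟨b, hb, hsum⟩ := hrep
  have hm0 : 0 < m := by omega
  set a : ℕ → ℕ := fun x => b (x / m) / g ^ (x % m) % g with ha
  set F : Finset ℕ := (Finset.range (m * (K + 1))).filter (fun x => a x ≠ 0) with hF
  have hbm : ∀ j, b j % g ^ m = b j := by
    intro j
    refine Nat.mod_eq_of_lt (lt_of_lt_of_le (hb j) ?_)
    exact Nat.pow_le_pow_right (by omega) (by omega)
  have hsum' : v = ∑ x ∈ Finset.range (m * (K + 1)), a x * g ^ x := by
    rw [hsum, ha, sum_blocks g m hm0 b (K + 1)]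
    exact Finset.sum_congr rfl fun j _ => by rw [hbm]
  have hsumF : v = ∑ x ∈ F, a x * g ^ x := by
    rw [hsum', hF]
    refine (Finset.sum_subset (Finset.filter_subset _ _) fun x _ hx => ?_).symm
    rw [Finset.mem_filter, not_and, not_not] at hx
    rw [hx ‹x ∈ _›, zero_mul]
  refine ⟨F, ?_, ?_, a, fun f hf => ?_, hsumF⟩
  · rw [Finset.nonempty_iff_ne_empty]
    intro hFe
    rw [hFe, Finset.sum_empty] at hsumF
    omega
  · intro x hx
    rw [Finset.mem_coe, hF, Finset.mem_filter] at hx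
    obtain ⟨-, hx2⟩ := hx
    have hxm : x % m < m - t := by
      by_contra hcon
      push_neg at hcon
      apply hx2
      rw [ha]
      have : b (x / m) < g ^ (x % m) :=
        lt_of_lt_of_le (hb _) (Nat.pow_le_pow_right (by omega) hcon)
      simp [Nat.div_eq_of_lt this]
    exact ⟨x / m, x % m, by omega, (Nat.div_add_mod x m).symm⟩
  · rw [hF, Finset.mem_filter] at hf
    have h2 : a f < g := Nat.mod_lt _ (by omega)
    have h1 : a f ≠ 0 := hf.2
    omega

lemma split_pos : ∀ (s n B : ℕ), 1 ≤ B → s ≤ n → n ≤ s * B →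
    ∃ x : Fin s → ℕ, (∀ i, 1 ≤ x i ∧ x i ≤ B) ∧ n = ∑ i, x i := by
  intro s
  induction s with
  | zero =>
    intro n B _ _ hn2
    simp only [Nat.zero_mul, Nat.le_zero] at hn2
    exact ⟨fun i => i.elim0, fun i => i.elim0, by simp [hn2]⟩
  | succ s ih =>
    intro n B hB hn1 hn2
    rcases le_or_gt (n - s) B with hc | hc
    · -- take x0 = n - s, rest = s
      obtain ⟨x, hx, hsx⟩ := ih s B hB le_rfl (Nat.le_mul_of_pos_right s (by omega))
      refine ⟨Fin.cons (n - s) x, fun i => ?_, ?_⟩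
      · refine Fin.cases ?_ (fun j => ?_) i
        · simp only [Fin.cons_zero]
          exact ⟨by omega, hc⟩
        · simp only [Fin.cons_succ]
          exact hx j
      · rw [Fin.sum_cons, ← hsx]
        omega
    · -- take x0 = B, rest = n - B
      have hrest1 : s ≤ n - B := by omega
      have hrest2 : n - B ≤ s * B := by
        have : n ≤ s * B + B := by
          have := hn2
          rw [Nat.succ_mul] at this
          omega
        omega
      obtain ⟨x, hx, hsx⟩ := ih (n - B) B hB hrest1 hrest2
      refine ⟨Fin.cons B x, fun i => ?_, ?_⟩
      · refine Fin.cases ?_ (fun j => ?_) i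
        · simp only [Fin.cons_zero]
          exact ⟨hB, le_rfl⟩
        · simp only [Fin.cons_succ]
          exact hx j
      · rw [Fin.sum_cons, ← hsx]
        omega

lemma split_nonneg : ∀ (s c B : ℕ), c ≤ s * B →
    ∃ y : Fin s → ℕ, (∀ i, y i ≤ B) ∧ c = ∑ i, y i := by
  intro s
  induction s with
  | zero =>
    intro c B hc
    simp only [Nat.zero_mul, Nat.le_zero] at hc
    exact ⟨fun i => i.elim0, fun i => i.elim0, by simp [hc]⟩
  | succ s ih =>
    intro c B hc
    have hc' : c - min c B ≤ s * B := by
      rcases le_or_gt c B with h | h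
      · simp [Nat.min_eq_left h]
      · rw [Nat.min_eq_right (le_of_lt h)]
        rw [Nat.succ_mul] at hc
        omega
    obtain ⟨y, hy, hsy⟩ := ih (c - min c B) B hc'
    refine ⟨Fin.cons (min c B) y, fun i => ?_, ?_⟩
    · refine Fin.cases ?_ (fun j => ?_) i
      · simp only [Fin.cons_zero]
        exact min_le_right _ _
      · simp only [Fin.cons_succ]
        exact hy j
    · rw [Fin.sum_cons, ← hsy]
      omega

lemma claim (g h t m : ℕ) (hg : 2 ≤ g) (ht : 1 ≤ t) (hh : 1 ≤ h)
    (hth : g ^ t * (g - 1) < h) (hm : g ^ (t + 2) * h < g ^ m) :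
    ∀ K n, h ≤ n → n ≤ h * ∑ j ∈ Finset.range (K + 1), (g ^ (m - t) - 1) * (g ^ m) ^ j →
    ∃ x : Fin h → ℕ, (∀ i, 1 ≤ x i ∧ BRep g m t K (x i)) ∧ n = ∑ i, x i := by
  -- preliminary numeric facts
  have hgt1 : 1 < g := hg
  have h1 : g ^ (t + 2) < g ^ m :=
    lt_of_le_of_lt (Nat.le_mul_of_pos_right _ hh) hm
  have htm : t + 3 ≤ m := by
    have := (Nat.pow_lt_pow_iff_right hgt1).mp h1
    omega
  have hsplitm : t + (m - t) = m := by omega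
  have hX1 : 1 ≤ g ^ (m - t) := Nat.one_le_pow _ _ (by omega)
  have hB1 : 1 ≤ g ^ (m - t) - 1 := by
    have : g ^ 1 ≤ g ^ (m - t) := Nat.pow_le_pow_right (by omega) (by omega)
    rw [pow_one] at this
    omega
  have hcancel : g ^ 2 * h < g ^ (m - t) := by
    have e : g ^ t * (g ^ 2 * h) < g ^ t * g ^ (m - t) := by
      calc g ^ t * (g ^ 2 * h) = g ^ (t + 2) * h := by rw [pow_add]; ring
        _ < g ^ m := hm
        _ = g ^ t * g ^ (m - t) := by rw [← pow_add, hsplitm]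
    exact lt_of_mul_lt_mul_left e (Nat.zero_le _)
  have h2h : 2 * h < g ^ (m - t) := by
    refine lt_of_le_of_lt ?_ hcancel
    have : 2 ≤ g ^ 2 := by nlinarith
    exact Nat.mul_le_mul_right h this
  have hKEY' : g ^ m + 2 * h + 1 ≤ h * g ^ (m - t) := by
    have e1 : (g ^ t * (g - 1) + 1) * g ^ (m - t) ≤ h * g ^ (m - t) :=
      Nat.mul_le_mul_right _ hth
    have e2 : (g ^ t * (g - 1) + 1) * g ^ (m - t) = (g - 1) * g ^ m + g ^ (m - t) := by
      rw [add_mul, one_mul, mul_comm (g ^ t) (g - 1), mul_assoc, ← pow_add, hsplitm]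
    have e3 : g ^ m ≤ (g - 1) * g ^ m := Nat.le_mul_of_pos_left _ (by omega)
    linarith
  have hKEY : g ^ m + h + 1 ≤ h * (g ^ (m - t) - 1) := by
    have e4 : h * (g ^ (m - t) - 1) + h * 1 = h * g ^ (m - t) := by
      rw [← Nat.mul_add, Nat.sub_add_cancel hX1]
    linarith
  intro K
  induction K with
  | zero =>
    intro n hn1 hn2
    rw [Finset.sum_range_one, pow_zero, mul_one] at hn2
    obtain ⟨x, hx, hsum⟩ := split_pos h n (g ^ (m - t) - 1) hB1 hn1 hn2
    refine ⟨x, fun i => ⟨(hx i).1, ⟨fun _ => x i, fun j => by show x i < g ^ (m - t); have := (hx i).2; omega, ?_⟩⟩, hsum⟩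
    rw [Finset.sum_range_one, pow_zero, mul_one]
  | succ K ih =>
    intro n hn1 hn2
    by_cases hcase : n ≤ h * ∑ j ∈ Finset.range (K + 1), (g ^ (m - t) - 1) * (g ^ m) ^ j
    · obtain ⟨x, hx, hs⟩ := ih n hn1 hcase
      exact ⟨x, fun i => ⟨(hx i).1, rep_mono (by omega) (hx i).2⟩, hs⟩
    · push_neg at hcase
      set μK := ∑ j ∈ Finset.range (K + 1), (g ^ (m - t) - 1) * (g ^ m) ^ j with hμK
      set GK1 := (g ^ m) ^ (K + 1) with hGK1
      have hGK1pos : 0 < GK1 := Nat.pow_pos (Nat.pow_pos (by omega))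
      have hGKpos : (1 : ℕ) ≤ (g ^ m) ^ K := Nat.one_le_pow _ _ (Nat.pow_pos (by omega))
      have hn2' : n ≤ h * μK + h * ((g ^ (m - t) - 1) * GK1) := by
        rw [Finset.sum_range_succ, Nat.mul_add] at hn2
        exact hn2
      -- lower bound for h * μK
      have hμKge : GK1 + h ≤ h * μK := by
        have t1 : (g ^ (m - t) - 1) * (g ^ m) ^ K ≤ μK :=
          Finset.single_le_sum (f := fun j => (g ^ (m - t) - 1) * (g ^ m) ^ j)
            (fun i _ => Nat.zero_le _) (Finset.self_mem_range_succ K)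
        have t2 : h * ((g ^ (m - t) - 1) * (g ^ m) ^ K) ≤ h * μK := Nat.mul_le_mul_left h t1
        have t3 : (g ^ m + h + 1) * (g ^ m) ^ K ≤ (h * (g ^ (m - t) - 1)) * (g ^ m) ^ K :=
          Nat.mul_le_mul_right _ hKEY
        have t5 : (h * (g ^ (m - t) - 1)) * (g ^ m) ^ K = h * ((g ^ (m - t) - 1) * (g ^ m) ^ K) := by
          ring
        have t4 : GK1 + h ≤ (g ^ m + h + 1) * (g ^ m) ^ K := by
          have e : (g ^ m + h + 1) * (g ^ m) ^ K
              = GK1 + h * (g ^ m) ^ K + (g ^ m) ^ K := by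
            rw [hGK1, pow_succ]; ring
          have e2 : h * 1 ≤ h * (g ^ m) ^ K := Nat.mul_le_mul_left h hGKpos
          linarith
        linarith
      -- choose c and r
      obtain ⟨c, r, hn_eq, hrh, hrμ, hcB⟩ : ∃ c r : ℕ, n = r + c * GK1 ∧ h ≤ r ∧
          r ≤ h * μK ∧ c ≤ h * (g ^ (m - t) - 1) := by
        have hPn : h * μK ≤ n := le_of_lt hcase
        obtain ⟨d, hd⟩ := Nat.le.dest hPn  -- h * μK + d = n
        have hdle : d ≤ h * (g ^ (m - t) - 1) * GK1 := by
          have e : h * ((g ^ (m - t) - 1) * GK1) = h * (g ^ (m - t) - 1) * GK1 := by ring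
          linarith [hn2']
        have hq := Nat.div_add_mod d GK1  -- GK1 * (d / GK1) + d % GK1 = d
        have hqle : d / GK1 ≤ h * (g ^ (m - t) - 1) := by
          have := Nat.div_le_div_right (c := GK1) hdle
          rwa [Nat.mul_div_cancel _ hGK1pos] at this
        by_cases hr0 : d % GK1 = 0
        · refine ⟨d / GK1, h * μK, ?_, by linarith, le_rfl, hqle⟩
          have e : (d / GK1) * GK1 = GK1 * (d / GK1) := by ring
          linarith
        · have hr0lt : d % GK1 < GK1 := Nat.mod_lt _ hGK1pos
          have hr0pos : 1 ≤ d % GK1 := by omega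
          obtain ⟨P', hP'⟩ := Nat.le.dest (show GK1 ≤ h * μK by linarith)  -- GK1 + P' = h * μK
          refine ⟨d / GK1 + 1, P' + d % GK1, ?_, by linarith, by linarith, ?_⟩
          · have e : (d / GK1 + 1) * GK1 = GK1 * (d / GK1) + GK1 := by ring
            linarith
          · -- d / GK1 + 1 ≤ h * B
            by_contra hcon
            push_neg at hcon
            have : h * (g ^ (m - t) - 1) ≤ d / GK1 := by omega
            have e2 : h * (g ^ (m - t) - 1) * GK1 ≤ (d / GK1) * GK1 :=
              Nat.mul_le_mul_right _ this
            have e3 : (d / GK1) * GK1 = GK1 * (d / GK1) := by ring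
            linarith
      obtain ⟨x, hx, hs⟩ := ih r hrh hrμ
      obtain ⟨y, hy, hsy⟩ := split_nonneg h c (g ^ (m - t) - 1) hcB
      refine ⟨fun i => x i + y i * GK1, fun i =>
        ⟨le_trans (hx i).1 (Nat.le_add_right _ _),
         rep_add_top (by have := hy i; omega) (hx i).2⟩, ?_⟩
      rw [Finset.sum_add_distrib, ← Finset.sum_mul, ← hs, ← hsy]
      exact hn_eq


/-- Let `g ≥ 2`, `h`, `t` be positive integers with `h > g ^ t * (g - 1)`,
and let `m` satisfy `g ^ m > g ^ (t + 2) * h`. With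
`W 0 = {m * k + j : k ∈ ℕ, 0 ≤ j ≤ m - t - 1}`, every integer `n ≥ h` belongs to the
`h`-fold sumset `h A_g(W 0)`; in particular `A_g(W 0)` is an asymptotic basis of
order `h`. -/
theorem stmt10 (g h t m : ℕ) (hg : 2 ≤ g) (ht : 1 ≤ t) (hh : 1 ≤ h)
    (hth : g ^ t * (g - 1) < h) (hm : g ^ (t + 2) * h < g ^ m) :
    (∀ n : ℕ, h ≤ n →
      n ∈ FoldSum h (AgSet g {x : ℕ | ∃ k j : ℕ, j ≤ m - t - 1 ∧ x = m * k + j})) ∧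
    IsAsymptoticBasis h (AgSet g {x : ℕ | ∃ k j : ℕ, j ≤ m - t - 1 ∧ x = m * k + j}) := by
  have hgt1 : 1 < g := hg
  have h1 : g ^ (t + 2) < g ^ m := lt_of_le_of_lt (Nat.le_mul_of_pos_right _ hh) hm
  have htm : t + 3 ≤ m := by
    have := (Nat.pow_lt_pow_iff_right hgt1).mp h1
    omega
  have part1 : ∀ n : ℕ, h ≤ n →
      n ∈ FoldSum h (AgSet g {x : ℕ | ∃ k j : ℕ, j ≤ m - t - 1 ∧ x = m * k + j}) := by
    intro n hn
    have hbound : n ≤ h * ∑ j ∈ Finset.range (n + 1), (g ^ (m - t) - 1) * (g ^ m) ^ j := by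
      have e1 : n < 2 ^ n := Nat.lt_two_pow_self (n := n)
      have e2 : (2 : ℕ) ^ n ≤ (g ^ m) ^ n :=
        Nat.pow_le_pow_left (le_trans hg (Nat.le_self_pow (by omega) g)) n
      have e3 : (g ^ m) ^ n ≤ (g ^ (m - t) - 1) * (g ^ m) ^ n := by
        refine Nat.le_mul_of_pos_left _ ?_
        have : g ^ 1 ≤ g ^ (m - t) := Nat.pow_le_pow_right (by omega) (by omega)
        rw [pow_one] at this
        omega
      have e4 : (g ^ (m - t) - 1) * (g ^ m) ^ n
          ≤ ∑ j ∈ Finset.range (n + 1), (g ^ (m - t) - 1) * (g ^ m) ^ j :=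
        Finset.single_le_sum (f := fun j => (g ^ (m - t) - 1) * (g ^ m) ^ j)
          (fun i _ => Nat.zero_le _) (Finset.self_mem_range_succ n)
      have e5 : ∑ j ∈ Finset.range (n + 1), (g ^ (m - t) - 1) * (g ^ m) ^ j
          ≤ h * ∑ j ∈ Finset.range (n + 1), (g ^ (m - t) - 1) * (g ^ m) ^ j :=
        Nat.le_mul_of_pos_left _ hh
      linarith
    obtain ⟨x, hx, hsum⟩ := claim g h t m hg ht hh hth hm n n hn hbound
    exact ⟨x, fun i => rep_mem hg ht (by omega) (hx i).1 (hx i).2, hsum⟩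
  exact ⟨part1, Filter.eventually_atTop.mpr ⟨h, part1⟩⟩
end

section
/- Let g ≥ 2, h, and t be positive integers with h > g^t(g−1), and let m be an integer with g^m > g^{t+2} h. Define W_0 = {mk + j : k ∈ ℕ, 0 ≤ j ≤ m−t−1} and, for 1 ≤ i ≤ h−1, W_i = {mk + j : k ∈ ℕ, k ≡ i (mod h−1), m−t ≤ j ≤ m−1}. Then W_0, …, W_{h-1} form a partition of ℕ, each W_r contains infinitely many intervals of at least t consecutive integers, and A = A_g(W_0) ∪ A_g(W_1) ∪ ⋯ ∪ A_g(W_{h-1}) is an asymptotic basis of order h that is NOT a minimal asymptotic basis of order h. -/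
lemma split_sum (h q lo hi : ℕ) (hh : 1 ≤ h) (h1 : h * lo ≤ q) (h2 : q ≤ h * hi) :
    ∃ x : Fin h → ℕ, (∀ i, lo ≤ x i ∧ x i ≤ hi) ∧ q = ∑ i, x i := by
  have hpos : 0 < h := hh
  have hdm := Nat.div_add_mod q h
  have hmod : q % h < h := Nat.mod_lt _ hpos
  have hdiv_le : q / h ≤ hi := by
    have := Nat.div_le_div_right (c := h) h2
    rwa [Nat.mul_div_cancel_left _ hpos] at this
  have hlo : lo ≤ q / h := (Nat.le_div_iff_mul_le hpos).2 (by linarith [h1, Nat.mul_comm h lo])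
  refine ⟨fun i => q / h + if (i : ℕ) < q % h then 1 else 0, ?_, ?_⟩
  · intro i
    constructor
    · exact le_trans hlo (Nat.le_add_right _ _)
    · by_cases hc : (i : ℕ) < q % h
      · simp only [hc, if_true]
        rcases eq_or_lt_of_le hdiv_le with he | hl
        · exfalso
          have : h * (q / h) = h * hi := by rw [he]
          omega
        · omega
      · simp [hc, hdiv_le]
  · have : (∑ i : Fin h, (q / h + if (i : ℕ) < q % h then 1 else 0)) =
        h * (q / h) + ∑ i : Fin h, (if (i : ℕ) < q % h then 1 else 0) := by
      rw [Finset.sum_add_distrib, Finset.sum_const, Finset.card_univ, Fintype.card_fin,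
        smul_eq_mul]
    rw [this]
    have : (∑ i : Fin h, (if (i : ℕ) < q % h then 1 else 0)) = q % h := by
      rw [Fin.sum_univ_eq_sum_range (fun i => if i < q % h then 1 else 0)]
      rw [Finset.sum_boole]
      simp only [Nat.cast_id]
      have heq : (Finset.range h).filter (fun i => i < q % h) = Finset.range (q % h) := by
        ext i; simp; omega
      rw [heq, Finset.card_range]
    omega


lemma digit_split (h M N : ℕ) (hh : 1 ≤ h) (hM2 : 2 ≤ M) (hhM : h ≤ M)
    (hMN : M + h ≤ h * N) :
    ∀ K n, h ≤ n → n < M ^ (K + 1) →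
    ∃ x : Fin h → ℕ → ℕ, (∀ i k, x i k ≤ N) ∧ (∀ i, ∃ k, k ≤ K ∧ 1 ≤ x i k) ∧
      (∀ i k, K < k → x i k = 0) ∧
      n = ∑ i, ∑ k ∈ Finset.range (K + 1), x i k * M ^ k := by
  intro K
  induction K with
  | zero =>
    intro n hn1 hn2
    have hpow : M ^ (0 + 1) = M := by ring
    have hle : n ≤ h * N := by omega
    obtain ⟨p, hp, hpe⟩ := split_sum h n 1 N hh (by omega) hle
    refine ⟨fun i k => if k = 0 then p i else 0, ?_, ?_, ?_, ?_⟩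
    · intro i k
      by_cases hk : k = 0 <;> simp [hk, (hp i).2]
    · intro i
      exact ⟨0, le_refl 0, by simpa using (hp i).1⟩
    · intro i k hk
      simp [show k ≠ 0 by omega]
    · simpa using hpe
  | succ K ih =>
    intro n hn1 hn2
    obtain ⟨q, hq⟩ : ∃ q, q = n / M ^ (K + 1) := ⟨_, rfl⟩
    obtain ⟨r, hr⟩ : ∃ r, r = n % M ^ (K + 1) := ⟨_, rfl⟩
    have hMp : 0 < M ^ (K + 1) := pow_pos (by omega) _
    have hdm : M ^ (K + 1) * q + r = n := by rw [hq, hr]; exact Nat.div_add_mod n _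
    have hrlt : r < M ^ (K + 1) := by rw [hr]; exact Nat.mod_lt _ hMp
    have hqlt : q < M := by
      rw [hq, Nat.div_lt_iff_lt_mul hMp]
      calc n < M ^ (K + 2) := hn2
      _ = M * M ^ (K + 1) := by ring
    clear hq hr
    by_cases hq0 : q = 0
    · -- n < M^(K+1), use ih
      have hdm' : r = n := by rw [hq0] at hdm; simpa using hdm
      have hn2' : n < M ^ (K + 1) := by omega
      obtain ⟨x, hx1, hx2, hx3, hx4⟩ := ih n hn1 hn2'
      refine ⟨x, hx1, fun i => ?_, fun i k hk => hx3 i k (by omega), ?_⟩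
      · obtain ⟨k, hk, hk1⟩ := hx2 i
        exact ⟨k, by omega, hk1⟩
      · rw [hx4]
        refine Finset.sum_congr rfl fun i _ => ?_
        conv_rhs => rw [Finset.sum_range_succ]
        rw [hx3 i (K + 1) (by omega)]
        simp
    · by_cases hrh : h ≤ r
      · -- use ih on r, distribute q at scale K+1
        obtain ⟨x, hx1, hx2, hx3, hx4⟩ := ih r hrh hrlt
        obtain ⟨p, hp, hpe⟩ := split_sum h q 0 N hh (by omega) (by omega)
        refine ⟨fun i k => if k = K + 1 then p i else x i k, ?_, ?_, ?_, ?_⟩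
        · intro i k
          by_cases hk : k = K + 1 <;> simp [hk, (hp i).2, hx1]
        · intro i
          obtain ⟨k, hk, hk1⟩ := hx2 i
          exact ⟨k, by omega, by simp [show k ≠ K + 1 by omega, hk1]⟩
        · intro i k hk
          simp [show k ≠ K + 1 by omega, hx3 i k (by omega)]
        · have key : ∀ i : Fin h, ∑ k ∈ Finset.range (K + 2),
              (if k = K + 1 then p i else x i k) * M ^ k
              = (∑ k ∈ Finset.range (K + 1), x i k * M ^ k) + p i * M ^ (K + 1) := by
            intro i
            rw [Finset.sum_range_succ]
            congr 1
            · exact Finset.sum_congr rfl fun k hk => by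
                simp [show k ≠ K + 1 from by simp at hk; omega]
            · simp
          rw [Finset.sum_congr rfl fun i _ => key i, Finset.sum_add_distrib,
            ← hx4, ← Finset.sum_mul, ← hpe]
          linarith [hdm]
      · -- r < h : borrow
        by_cases hK0 : K = 0
        · subst hK0
          obtain ⟨p, hp, hpe⟩ := split_sum h (q - 1) 0 N hh (by omega) (by omega)
          obtain ⟨u, hu, hue⟩ := split_sum h (M + r) 1 N hh (by omega) (by omega)
          refine ⟨fun i k => if k = 0 then u i else if k = 1 then p i else 0, ?_, ?_, ?_, ?_⟩
          · intro i k
            by_cases h0 : k = 0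
            · simp [h0, (hu i).2]
            · by_cases h1 : k = 1 <;> simp [h0, h1, (hp i).2]
          · intro i
            exact ⟨0, by omega, by simpa using (hu i).1⟩
          · intro i k hk
            simp [show k ≠ 0 by omega, show k ≠ 1 by omega]
          · have key : ∀ i : Fin h, ∑ k ∈ Finset.range 2,
                (if k = 0 then u i else if k = 1 then p i else 0) * M ^ k
                = u i + p i * M ^ 1 := by
              intro i
              rw [Finset.sum_range_succ, Finset.sum_range_one]
              simp
            rw [Finset.sum_congr rfl fun i _ => key i, Finset.sum_add_distrib,
              ← hue, ← Finset.sum_mul, ← hpe]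
            have e1 : (q - 1) * M ^ 1 + M ^ 1 = q * M ^ 1 := by
              have hq1 : q - 1 + 1 = q := by omega
              calc (q - 1) * M ^ 1 + M ^ 1 = (q - 1 + 1) * M ^ 1 := by ring
              _ = q * M ^ 1 := by rw [hq1]
            have e2 : M ^ 1 = M := by ring
            have e3 : M ^ (0 + 1) = M ^ 1 := by norm_num
            rw [e3] at hdm
            linarith [hdm]
        · -- K ≥ 1: scales K+1: q-1, K: M, 0: r
          obtain ⟨p, hp, hpe⟩ := split_sum h (q - 1) 0 N hh (by omega) (by omega)
          obtain ⟨u, hu, hue⟩ := split_sum h M 1 N hh (by omega) (by omega)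
          obtain ⟨v, hv, hve⟩ := split_sum h r 0 N hh (by omega) (by omega)
          refine ⟨fun i k => if k = K + 1 then p i else if k = K then u i
            else if k = 0 then v i else 0, ?_, ?_, ?_, ?_⟩
          · intro i k
            by_cases h1 : k = K + 1
            · simp [h1, (hp i).2]
            · by_cases h2 : k = K
              · simp [h1, h2, (hu i).2]
              · by_cases h3 : k = 0
                · simp [h1, h2, h3, show ¬(0 = K) from by omega, (hv i).2]
                · simp [h1, h2, h3]
          · intro i
            exact ⟨K, by omega, by simp [show K ≠ K + 1 by omega, (hu i).1]⟩
          · intro i k hk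
            simp [show k ≠ K + 1 by omega, show k ≠ K by omega, show k ≠ 0 by omega]
          · have key : ∀ i : Fin h, ∑ k ∈ Finset.range (K + 2),
                (if k = K + 1 then p i else if k = K then u i
                  else if k = 0 then v i else 0) * M ^ k
                = v i + u i * M ^ K + p i * M ^ (K + 1) := by
              intro i
              rw [Finset.sum_range_succ, Finset.sum_range_succ]
              have hv0 : ∑ k ∈ Finset.range K,
                  (if k = K + 1 then p i else if k = K then u i
                    else if k = 0 then v i else 0) * M ^ k = v i := by
                rw [Finset.sum_eq_single 0]
                · simp [show (0:ℕ) ≠ K + 1 by omega, show ¬(0 = K) from by omega]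
                · intro k hk hk0
                  simp at hk
                  simp [show k ≠ K + 1 by omega, show k ≠ K by omega, hk0]
                · intro h0
                  simp at h0
                  omega
              rw [hv0]
              simp [show K ≠ K + 1 by omega]
            rw [Finset.sum_congr rfl fun i _ => key i, Finset.sum_add_distrib,
              Finset.sum_add_distrib, ← Finset.sum_mul, ← Finset.sum_mul,
              ← hve, ← hue, ← hpe]
            have e1 : (q - 1) * M ^ (K + 1) + M ^ (K + 1) = q * M ^ (K + 1) := by
              have hq1 : q - 1 + 1 = q := by omega
              calc (q - 1) * M ^ (K + 1) + M ^ (K + 1)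
                  = (q - 1 + 1) * M ^ (K + 1) := by ring
              _ = q * M ^ (K + 1) := by rw [hq1]
            have e2 : M * M ^ K = M ^ (K + 1) := by ring
            linarith [hdm]

lemma geom_bound {g : ℕ} (hg : 2 ≤ g) :
    ∀ L, ∑ f ∈ Finset.range L, (g - 1) * g ^ f = g ^ L - 1 := by
  intro L
  induction L with
  | zero => simp
  | succ L ih =>
    rw [Finset.sum_range_succ, ih]
    have hpos : 1 ≤ g ^ L := Nat.one_le_pow _ _ (by omega)
    have hpow : g ^ (L + 1) = g ^ L * g := pow_succ g L
    have e : (g - 1) * g ^ L + g ^ L = g ^ L * g := by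
      have h1 : g - 1 + 1 = g := by omega
      calc (g - 1) * g ^ L + g ^ L = (g - 1 + 1) * g ^ L := by ring
      _ = g * g ^ L := by rw [h1]
      _ = g ^ L * g := by ring
    omega

lemma pow_digit_forced {g : ℕ} (hg : 2 ≤ g) {W : Set ℕ} {q : ℕ}
    (hn : g ^ q ∈ AgSet g W) : q ∈ W := by
  obtain ⟨F, hne, hsub, a, hb, heq⟩ := hn
  have hgpos : 0 < g := by omega
  set p := F.max' hne with hp
  have hpF : p ∈ F := F.max'_mem hne
  -- upper bound
  have hub : g ^ q < g ^ (p + 1) := by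
    have h1 : ∑ f ∈ F, a f * g ^ f ≤ ∑ f ∈ F, (g - 1) * g ^ f :=
      Finset.sum_le_sum fun f hf => Nat.mul_le_mul_right _ (hb f hf).2
    have h2 : ∑ f ∈ F, (g - 1) * g ^ f ≤ ∑ f ∈ Finset.range (p + 1), (g - 1) * g ^ f := by
      apply Finset.sum_le_sum_of_subset_of_nonneg
      · intro f hf
        exact Finset.mem_range.2 (by have := F.le_max' f hf; omega)
      · intro _ _ _; exact Nat.zero_le _
    have h3 := geom_bound hg (p + 1)
    have hpos : 1 ≤ g ^ (p + 1) := Nat.one_le_pow _ _ hgpos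
    omega
  -- lower bound
  have hlb : g ^ p ≤ g ^ q := by
    rw [heq]
    calc g ^ p = 1 * g ^ p := by ring
    _ ≤ a p * g ^ p := Nat.mul_le_mul_right _ (hb p hpF).1
    _ ≤ ∑ f ∈ F, a f * g ^ f :=
        Finset.single_le_sum (f := fun f => a f * g ^ f) (fun f _ => Nat.zero_le _) hpF
  have h1 : p ≤ q := (Nat.pow_le_pow_iff_right (by omega : 1 < g)).1 hlb
  have h2 : q < p + 1 := (Nat.pow_lt_pow_iff_right (by omega : 1 < g)).1 hub
  have : p = q := by omega
  rw [← this]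
  exact hsub hpF

def GRep (g : ℕ) (W : Set ℕ) (lo hi n : ℕ) : Prop :=
  ∃ F : Finset ℕ, ∃ a : ℕ → ℕ, ↑F ⊆ W ∧ (∀ f ∈ F, lo ≤ f ∧ f < hi) ∧
    (∀ f ∈ F, 1 ≤ a f ∧ a f ≤ g - 1) ∧ n = ∑ f ∈ F, a f * g ^ f

lemma rep_zero (g : ℕ) (W : Set ℕ) (lo hi : ℕ) : GRep g W lo hi 0 :=
  ⟨∅, fun _ => 0, by simp, by simp, by simp, by simp⟩

lemma rep_mono_s11 {g : ℕ} {W : Set ℕ} {lo hi n lo' hi' : ℕ} (hr : GRep g W lo hi n)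
    (h1 : lo' ≤ lo) (h2 : hi ≤ hi') : GRep g W lo' hi' n := by
  obtain ⟨F, a, hs, hb, hc, he⟩ := hr
  exact ⟨F, a, hs, fun f hf => ⟨le_trans h1 (hb f hf).1, lt_of_lt_of_le (hb f hf).2 h2⟩, hc, he⟩

lemma rep_add {g : ℕ} {W : Set ℕ} {lo mid hi n₁ n₂ : ℕ}
    (hlm : lo ≤ mid) (hmh : mid ≤ hi)
    (hr1 : GRep g W lo mid n₁) (hr2 : GRep g W mid hi n₂) :
    GRep g W lo hi (n₁ + n₂) := by
  obtain ⟨F₁, a₁, hs₁, hb₁, hc₁, he₁⟩ := hr1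
  obtain ⟨F₂, a₂, hs₂, hb₂, hc₂, he₂⟩ := hr2
  have hdisj : Disjoint F₁ F₂ := by
    rw [Finset.disjoint_left]
    intro f h1 h2
    exact absurd ((hb₂ f h2).1) (not_le.2 ((hb₁ f h1).2))
  refine ⟨F₁ ∪ F₂, fun f => if f < mid then a₁ f else a₂ f, ?_, ?_, ?_, ?_⟩
  · push_cast
    exact Set.union_subset hs₁ hs₂
  · intro f hf
    rcases Finset.mem_union.1 hf with h1 | h2
    · exact ⟨(hb₁ f h1).1, lt_of_lt_of_le (hb₁ f h1).2 hmh⟩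
    · exact ⟨le_trans hlm (hb₂ f h2).1, (hb₂ f h2).2⟩
  · intro f hf
    rcases Finset.mem_union.1 hf with h1 | h2
    · simpa [(hb₁ f h1).2] using hc₁ f h1
    · simpa [not_lt.2 (hb₂ f h2).1] using hc₂ f h2
  · rw [Finset.sum_union hdisj]
    congr 1
    · rw [he₁]
      exact Finset.sum_congr rfl fun f h1 => by simp [(hb₁ f h1).2]
    · rw [he₂]
      exact Finset.sum_congr rfl fun f h2 => by simp [not_lt.2 (hb₂ f h2).1]

lemma rep_block {g : ℕ} (hg : 2 ≤ g) {W : Set ℕ} :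
    ∀ c p x : ℕ, x < g ^ c → (∀ j < c, p + j ∈ W) → GRep g W p (p + c) (x * g ^ p) := by
  intro c
  induction c with
  | zero =>
    intro p x hx _
    have hx0 : x = 0 := by simpa using hx
    subst hx0
    simpa using rep_zero g W p p
  | succ c ih =>
    intro p x hx hW
    have hg0 : 0 < g := by omega
    have hx' : x / g < g ^ c := by
      rw [Nat.div_lt_iff_lt_mul hg0]
      calc x < g ^ (c + 1) := hx
      _ = g ^ c * g := by ring
    have hrec : GRep g W (p + 1) (p + 1 + c) (x / g * g ^ (p + 1)) :=
      ih (p + 1) (x / g) hx' (fun j hj => by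
        have := hW (j + 1) (by omega)
        simpa [Nat.add_assoc, Nat.add_comm 1 j] using this)
    have hdig : GRep g W p (p + 1) (x % g * g ^ p) := by
      by_cases h0 : x % g = 0
      · rw [h0]; simpa using rep_zero g W p (p + 1)
      · refine ⟨{p}, fun _ => x % g, ?_, ?_, ?_, ?_⟩
        · simpa using hW 0 (by omega)
        · simp
        · intro f hf
          have h2 := Nat.mod_lt x hg0
          dsimp only
          omega
        · simp
    have := rep_add (by omega) (by omega) hdig hrec
    have heq : x % g * g ^ p + x / g * g ^ (p + 1) = x * g ^ (p + 1 - 1) := by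
      have := Nat.mod_add_div x g
      calc x % g * g ^ p + x / g * g ^ (p + 1)
          = (x % g + g * (x / g)) * g ^ p := by ring
        _ = x * g ^ p := by rw [this]
        _ = x * g ^ (p + 1 - 1) := by norm_num
    rw [heq] at this
    simpa using rep_mono_s11 this (le_refl _) (by omega)

lemma rep_agset {g : ℕ} {W : Set ℕ} {hi n : ℕ} (hr : GRep g W 0 hi n) (hn : 1 ≤ n) :
    n ∈ AgSet g W := by
  obtain ⟨F, a, hs, hb, hc, he⟩ := hr
  refine ⟨F, ?_, hs, a, hc, he⟩
  rcases F.eq_empty_or_nonempty with h | h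
  · subst h; simp at he; omega
  · exact h

lemma rep_series {g m c : ℕ} (hg : 2 ≤ g) {W : Set ℕ} (hc : c ≤ m)
    (hW : ∀ k j, j < c → m * k + j ∈ W) (x : ℕ → ℕ) (hx : ∀ k, x k < g ^ c) :
    ∀ KK, GRep g W 0 (m * KK) (∑ k ∈ Finset.range KK, x k * (g ^ m) ^ k) := by
  intro KK
  induction KK with
  | zero => simpa using rep_zero g W 0 0
  | succ KK ih =>
    rw [Finset.sum_range_succ]
    have hblock : GRep g W (m * KK) (m * KK + c) (x KK * g ^ (m * KK)) :=
      rep_block hg c (m * KK) (x KK) (hx KK) (fun j hj => hW KK j hj)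
    have hblock' : GRep g W (m * KK) (m * (KK + 1)) (x KK * g ^ (m * KK)) :=
      rep_mono_s11 hblock (le_refl _) (by nlinarith)
    have : x KK * (g ^ m) ^ KK = x KK * g ^ (m * KK) := by rw [← pow_mul]
    rw [this]
    exact rep_add (by omega) (by nlinarith) ih hblock'


/-- Let `g ≥ 2`, `h`, `t` be positive integers with `h > g ^ t * (g - 1)`,
and let `m` satisfy `g ^ m > g ^ (t + 2) * h`. With
`W 0 = {m * k + j : k ∈ ℕ, 0 ≤ j ≤ m - t - 1}` and, for `1 ≤ i ≤ h - 1`,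
`W i = {m * k + j : k ∈ ℕ, k ≡ i mod (h - 1), m - t ≤ j ≤ m - 1}`, the sets
`W 0, …, W (h-1)` partition ℕ, each contains infinitely many intervals of at least `t`
consecutive integers, and `A = A_g(W 0) ∪ ⋯ ∪ A_g(W (h-1))` is an asymptotic basis of
order `h` that is not minimal. -/
theorem stmt11 (g h t m : ℕ) (hg : 2 ≤ g) (ht : 1 ≤ t) (hh : 1 ≤ h)
    (hth : g ^ t * (g - 1) < h) (hm : g ^ (t + 2) * h < g ^ m)
    (W : ℕ → Set ℕ)
    (hW0 : W 0 = {x : ℕ | ∃ k j : ℕ, j ≤ m - t - 1 ∧ x = m * k + j})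
    (hWi : ∀ i : ℕ, 1 ≤ i → i ≤ h - 1 →
      W i = {x : ℕ | ∃ k j : ℕ, k % (h - 1) = i % (h - 1) ∧
        m - t ≤ j ∧ j ≤ m - 1 ∧ x = m * k + j}) :
    (⋃ r ∈ Finset.range h, W r) = Set.univ ∧
    (∀ r < h, ∀ s < h, r ≠ s → Disjoint (W r) (W s)) ∧
    (∀ r < h, {x : ℕ | ∀ j < t, x + j ∈ W r}.Infinite) ∧
    IsAsymptoticBasis h (⋃ r ∈ Finset.range h, AgSet g (W r)) ∧
    ¬ IsMinimalAsymptoticBasis h (⋃ r ∈ Finset.range h, AgSet g (W r)) := by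
  -- numeric facts
  have hg1 : 1 < g := hg
  have hgt2 : 2 ≤ g ^ t := le_trans hg (Nat.le_self_pow (by omega) g)
  have hh3 : 3 ≤ h := by
    have : 2 * 1 ≤ g ^ t * (g - 1) := Nat.mul_le_mul hgt2 (by omega)
    omega
  have hgth : g ^ t < h := by
    have := Nat.le_mul_of_pos_right (g ^ t) (show 0 < g - 1 by omega)
    omega
  have hm23 : 2 * t + 3 ≤ m := by
    have h1 : g ^ (2 * t + 2) < g ^ m := by
      calc g ^ (2 * t + 2) = g ^ (t + 2) * g ^ t := by rw [← pow_add]; ring_nf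
      _ < g ^ (t + 2) * h :=
          mul_lt_mul_of_pos_left hgth (pow_pos (by omega) _)
      _ < g ^ m := hm
    have := (Nat.pow_lt_pow_iff_right hg1).1 h1
    omega
  have hmpos : 0 < m := by omega
  -- div/mod uniqueness helpers
  have umod : ∀ k j, j < m → (m * k + j) % m = j := by
    intro k j hj
    rw [Nat.mul_add_mod, Nat.mod_eq_of_lt hj]
  have udiv : ∀ k j, j < m → (m * k + j) / m = k := by
    intro k j hj
    rw [Nat.mul_add_div hmpos, Nat.div_eq_of_lt hj]
    omega
  have hM2 : 2 ≤ g ^ m := le_trans hg (Nat.le_self_pow (by omega) g)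
  have hhM : h ≤ g ^ m := by
    have h1 : h ≤ g ^ (t + 2) * h := Nat.le_mul_of_pos_left h (pow_pos (by omega) _)
    omega
  -- key inequality : g^m + h ≤ h * (g^(m-t) - 1)
  have epq : g ^ t * g ^ (m - t) = g ^ m := by
    rw [← pow_add]
    congr 1
    omega
  have hP4 : g ^ 2 * h < g ^ (m - t) := by
    have h1 : g ^ t * (g ^ 2 * h) < g ^ t * g ^ (m - t) := by
      calc g ^ t * (g ^ 2 * h) = g ^ (t + 2) * h := by rw [pow_add]; ring
      _ < g ^ m := hm
      _ = g ^ t * g ^ (m - t) := epq.symm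
    exact Nat.lt_of_mul_lt_mul_left h1
  have hg2 : 4 ≤ g ^ 2 := by nlinarith
  have hP4h : 4 * h < g ^ (m - t) := by
    have : 4 * h ≤ g ^ 2 * h := Nat.mul_le_mul_right h hg2
    omega
  have key : g ^ m + h ≤ h * (g ^ (m - t) - 1) := by
    have hP1 : 1 ≤ g ^ (m - t) := Nat.one_le_pow _ _ (by omega)
    have e1 : h * (g ^ (m - t) - 1) + h = h * g ^ (m - t) := by
      have h2 : g ^ (m - t) - 1 + 1 = g ^ (m - t) := by omega
      calc h * (g ^ (m - t) - 1) + h = h * (g ^ (m - t) - 1 + 1) := by ring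
      _ = h * g ^ (m - t) := by rw [h2]
    have h1 : (g ^ t * (g - 1) + 1) * g ^ (m - t) ≤ h * g ^ (m - t) :=
      Nat.mul_le_mul_right _ (by omega)
    have h2 : (g ^ t * (g - 1) + 1) * g ^ (m - t)
        = g ^ t * (g - 1) * g ^ (m - t) + g ^ (m - t) := by ring
    have h3 : g ^ t * g ^ (m - t) ≤ g ^ t * (g - 1) * g ^ (m - t) := by
      have : g ^ t ≤ g ^ t * (g - 1) := Nat.le_mul_of_pos_right _ (by omega)
      exact Nat.mul_le_mul_right _ this
    omega
  set A := ⋃ r ∈ Finset.range h, AgSet g (W r) with hA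
  have hWmem : ∀ k j, j < m - t → m * k + j ∈ W 0 := by
    intro k j hj
    rw [hW0]
    exact ⟨k, j, by omega, rfl⟩
  have basis0 : ∀ n, h ≤ n → n ∈ FoldSum h (AgSet g (W 0)) := by
    intro n hn
    have hn2 : n < (g ^ m) ^ (n + 1) := by
      calc n < 2 ^ n := Nat.lt_two_pow_self
      _ ≤ 2 ^ (n + 1) := Nat.pow_le_pow_right (by omega) (by omega)
      _ ≤ (g ^ m) ^ (n + 1) := Nat.pow_le_pow_left hM2 _
    obtain ⟨x, hx1, hx2, hx3, hx4⟩ := digit_split h (g ^ m) (g ^ (m - t) - 1)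
      hh hM2 hhM (by omega) n n hn hn2
    refine ⟨fun i => ∑ k ∈ Finset.range (n + 1), x i k * (g ^ m) ^ k, fun i => ?_, hx4⟩
    have hrep : GRep g (W 0) 0 (m * (n + 1))
        (∑ k ∈ Finset.range (n + 1), x i k * (g ^ m) ^ k) :=
      rep_series hg (by omega) hWmem (x i)
        (fun k => by
          have h1 := hx1 i k
          have h2 : 1 ≤ g ^ (m - t) := Nat.one_le_pow _ _ (by omega)
          omega) (n + 1)
    apply rep_agset hrep
    obtain ⟨k, hk, hk1⟩ := hx2 i
    calc (1 : ℕ) = 1 * 1 := by ring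
    _ ≤ x i k * (g ^ m) ^ k := Nat.mul_le_mul hk1 (Nat.one_le_pow _ _ (by omega))
    _ ≤ ∑ k ∈ Finset.range (n + 1), x i k * (g ^ m) ^ k :=
        Finset.single_le_sum (f := fun k => x i k * (g ^ m) ^ k)
          (fun _ _ => Nat.zero_le _) (Finset.mem_range.2 (by omega))
  have hsub0 : AgSet g (W 0) ⊆ A := by
    intro y hy
    exact Set.mem_iUnion₂.2 ⟨0, Finset.mem_range.2 (by omega), hy⟩
  have fold_mono : ∀ S T : Set ℕ, S ⊆ T → FoldSum h S ⊆ FoldSum h T := by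
    intro S T hST y hy
    obtain ⟨x, hx, he⟩ := hy
    exact ⟨x, fun i => hST (hx i), he⟩
  have hbasisA : IsAsymptoticBasis h A :=
    Filter.eventually_atTop.2 ⟨h, fun n hn => fold_mono _ _ hsub0 (basis0 n hn)⟩
  refine ⟨?_, ?_, ?_, hbasisA, ?_⟩
  · -- coverage
    ext x
    simp only [Set.mem_iUnion, Set.mem_univ, iff_true]
    have hx := Nat.div_add_mod x m
    have hj : x % m < m := Nat.mod_lt _ hmpos
    by_cases hcase : x % m ≤ m - t - 1
    · exact ⟨0, Finset.mem_range.2 (by omega), by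
        rw [hW0]; exact ⟨x / m, x % m, hcase, by omega⟩⟩
    · by_cases hk0 : (x / m) % (h - 1) = 0
      · refine ⟨h - 1, Finset.mem_range.2 (by omega), ?_⟩
        rw [hWi (h - 1) (by omega) (le_refl _)]
        exact ⟨x / m, x % m, by rw [hk0, Nat.mod_self], by omega, by omega, by omega⟩
      · refine ⟨(x / m) % (h - 1), Finset.mem_range.2 ?_, ?_⟩
        · have : (x / m) % (h - 1) < h - 1 := Nat.mod_lt _ (by omega)
          omega
        · rw [hWi ((x / m) % (h - 1)) (by omega)
            (by have : (x / m) % (h - 1) < h - 1 := Nat.mod_lt _ (by omega); omega)]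
        
          refine ⟨x / m, x % m, ?_, by omega, by omega, by omega⟩
          exact (Nat.mod_mod_of_dvd _ dvd_rfl).symm
      
  · -- disjointness
    have w0 : ∀ y, y ∈ W 0 → y % m ≤ m - t - 1 := by
      intro y hy
      rw [hW0] at hy
      obtain ⟨k, j, hj, he⟩ := hy
      subst he
      rw [umod k j (by omega)]
      exact hj
    have wi : ∀ i, 1 ≤ i → i ≤ h - 1 → ∀ y ∈ W i,
        m - t ≤ y % m ∧ (y / m) % (h - 1) = i % (h - 1) := by
      intro i h1 h2 y hy
      rw [hWi i h1 h2] at hy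
      obtain ⟨k, j, hk, hj1, hj2, he⟩ := hy
      subst he
      rw [umod k j (by omega), udiv k j (by omega)]
      exact ⟨hj1, hk⟩
    have modinj : ∀ i i', 1 ≤ i → i ≤ h - 1 → 1 ≤ i' → i' ≤ h - 1 →
        i % (h - 1) = i' % (h - 1) → i = i' := by
      intro i i' h1 h2 h3 h4 h5
      by_cases hi : i = h - 1 <;> by_cases hi' : i' = h - 1
      · omega
      · rw [hi, Nat.mod_self, Nat.mod_eq_of_lt (by omega : i' < h - 1)] at h5
        omega
      · rw [hi', Nat.mod_self, Nat.mod_eq_of_lt (by omega : i < h - 1)] at h5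
        omega
      · rw [Nat.mod_eq_of_lt (by omega : i < h - 1),
          Nat.mod_eq_of_lt (by omega : i' < h - 1)] at h5
        omega
    intro r hr s hs hrs
    rw [Set.disjoint_left]
    intro x hxr hxs
    rcases Nat.eq_zero_or_pos r with hr0 | hr1 <;> rcases Nat.eq_zero_or_pos s with hs0 | hs1
    · omega
    · subst hr0
      have h1 := w0 x hxr
      have h2 := (wi s (by omega) (by omega) x hxs).1
      omega
    · subst hs0
      have h1 := w0 x hxs
      have h2 := (wi r (by omega) (by omega) x hxr).1
      omega
    · have h1 := (wi r (by omega) (by omega) x hxr).2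
      have h2 := (wi s (by omega) (by omega) x hxs).2
      exact hrs (modinj r s (by omega) (by omega) (by omega) (by omega) (by omega))
  · -- infinitude
    intro r hr
    rcases Nat.eq_zero_or_pos r with hr0 | hr1
    · subst hr0
      apply Set.infinite_of_injective_forall_mem
        (f := fun k : ℕ => m * k)
      · intro a b hab
        simpa using Nat.eq_of_mul_eq_mul_left hmpos hab
      · intro a
        intro j hj
        rw [hW0]
        exact ⟨a, j, by omega, rfl⟩
    · apply Set.infinite_of_injective_forall_mem
        (f := fun n : ℕ => m * ((h - 1) * n + r) + (m - t))
      · intro a b hab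
        simp only at hab
        have h1 : m * ((h - 1) * a + r) = m * ((h - 1) * b + r) := by omega
        have h2 := Nat.eq_of_mul_eq_mul_left hmpos h1
        have h3 : (h - 1) * a = (h - 1) * b := by omega
        exact Nat.eq_of_mul_eq_mul_left (by omega) h3
      · intro a
        intro j hj
        rw [hWi r hr1 (by omega)]
        refine ⟨(h - 1) * a + r, m - t + j, Nat.mul_add_mod _ _ _, by omega, by omega, by omega⟩
  · intro hmin
    have heW : (m - 1 : ℕ) ∈ W (h - 1) := by
      rw [hWi (h - 1) (by omega) (le_refl _)]
      exact ⟨0, m - 1, by rw [Nat.mod_self, Nat.zero_mod], by omega, le_refl _, by omega⟩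
    have heA : g ^ (m - 1) ∈ A := by
      apply Set.mem_iUnion₂.2
      refine ⟨h - 1, Finset.mem_range.2 (by omega), ?_⟩
      exact ⟨{m - 1}, Finset.singleton_nonempty _, by simpa using heW, fun _ => 1,
        fun f hf => ⟨le_refl _, by show (1:ℕ) ≤ g - 1; omega⟩, by simp⟩
    have heNot : g ^ (m - 1) ∉ AgSet g (W 0) := by
      intro hmem
      have hW := pow_digit_forced hg hmem
      rw [hW0] at hW
      obtain ⟨k, j, hj, he⟩ := hW
      rcases Nat.eq_zero_or_pos k with hk | hk
      · subst hk; omega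
      · have : m * 1 ≤ m * k := Nat.mul_le_mul_left m hk
        omega
    have hBsub : A \ {g ^ (m - 1)} ⊂ A := by
      constructor
      · exact Set.diff_subset
      · intro hsub
        have := hsub heA
        exact this.2 rfl
    apply hmin.2 (A \ {g ^ (m - 1)}) hBsub
    have hsub0' : AgSet g (W 0) ⊆ A \ {g ^ (m - 1)} := by
      intro y hy
      refine ⟨hsub0 hy, ?_⟩
      intro hy2
      rw [Set.mem_singleton_iff] at hy2
      subst hy2
      exact heNot hy
    exact Filter.eventually_atTop.2 ⟨h, fun n hn => fold_mono _ _ hsub0' (basis0 n hn)⟩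
end
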